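/- arXiv:math/0009249 — 5 statements merged into one kernel-verified Lean document; each statement's English description precedes it below -/
import Mathlib

section
/- If a locally compact group H acts freely and properly on a locally compact Hausdorff space P, then the translation function tr : P ×_{H\P} P → H, characterised by q = tr(q,p)•p for all pairs (q,p) with H•q = H•p, is well-defined and continuous. -/
/-!
Freeness makes the shear map `(s, p) ↦ (s • p, p)` a bijection from `H × P` onto the pairs of
points in a common orbit, and properness makes it a closed map, hence a homeomorphism onto
that subspace. The translation function is its inverse followed by the first projection.
-/

open Function

namespace MulAction

variable {H P : Type*} [Group H] [MulAction H P]

variable (H P) in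
abbrev OrbitPairs : Type _ := {qp : P × P // orbit H qp.1 = orbit H qp.2}

def shear (sp : H × P) : OrbitPairs H P :=
  ⟨(sp.1 • sp.2, sp.2), orbit_smul sp.1 sp.2⟩

lemma smul_left_cancel_of_free (hfree : ∀ (s : H) (p : P), s • p = p → s = 1) {s t : H}
    {p : P} (h : s • p = t • p) : s = t :=
  inv_mul_eq_one.mp (hfree _ p (by rw [mul_smul, h, inv_smul_smul])) |>.symm

lemma shear_injective (hfree : ∀ (s : H) (p : P), s • p = p → s = 1) :
    Injective (shear : H × P → OrbitPairs H P) := by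
  rintro ⟨s, p⟩ ⟨t, p'⟩ h
  obtain ⟨hsmul, rfl⟩ := Prod.ext_iff.mp (congrArg Subtype.val h)
  exact Prod.ext (smul_left_cancel_of_free hfree hsmul) rfl

lemma shear_surjective : Surjective (shear : H × P → OrbitPairs H P) := by
  rintro ⟨⟨q, p⟩, h⟩
  obtain ⟨s, hs⟩ : q ∈ orbit H p := h ▸ mem_orbit_self q
  exact ⟨(s, p), Subtype.ext (Prod.ext hs rfl)⟩

variable [TopologicalSpace H] [TopologicalSpace P]

lemma isHomeomorph_shear (hfree : ∀ (s : H) (p : P), s • p = p → s = 1)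
    (hproper : IsProperMap (fun sp : H × P => (sp.1 • sp.2, sp.2))) :
    IsHomeomorph (shear : H × P → OrbitPairs H P) :=
  isHomeomorph_iff_continuous_isClosedMap_bijective.2
    ⟨hproper.continuous.subtype_mk _, hproper.isClosedMap.codRestrict _,
      shear_injective hfree, shear_surjective⟩

end MulAction

open MulAction in
theorem statement1_general
    (H P : Type*) [Group H] [TopologicalSpace H] [TopologicalSpace P]
    [MulAction H P]
    (hfree : ∀ (s : H) (p : P), s • p = p → s = 1)
    (hproper : IsProperMap (fun sp : H × P => (sp.1 • sp.2, sp.2))) :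
    ∃ tr : {qp : P × P // MulAction.orbit H qp.1 = MulAction.orbit H qp.2} → H,
      Continuous tr ∧
      (∀ qp, tr qp • qp.val.2 = qp.val.1) ∧
      (∀ qp (s : H), s • qp.val.2 = qp.val.1 → s = tr qp) := by
  let e := (isHomeomorph_shear hfree hproper).homeomorph
  refine ⟨fun qp => (e.symm qp).1, continuous_fst.comp e.symm.continuous, fun qp => ?_,
    fun qp s hs => ?_⟩
  · obtain ⟨hsmul, hsnd⟩ := Prod.ext_iff.mp (congrArg Subtype.val (e.apply_symm_apply qp))
    rwa [← hsnd]
  · have : e.symm qp = (s, qp.val.2) := e.symm_apply_eq.mpr (Subtype.ext (Prod.ext hs.symm rfl))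
    exact (congrArg Prod.fst this).symm

/-- If a locally compact group `H` acts freely and properly on a locally
compact Hausdorff space `P`, then the translation function
`tr : P ×_{H\P} P → H`, characterised by `q = tr(q,p) • p` whenever `H•q = H•p`,
is well-defined (exists, and is unique by freeness) and continuous. -/
theorem statement1
    (H P : Type*) [Group H] [TopologicalSpace H] [IsTopologicalGroup H]
    [LocallyCompactSpace H] [TopologicalSpace P] [T2Space P] [LocallyCompactSpace P]
    [MulAction H P] [ContinuousSMul H P]
    (hfree : ∀ (s : H) (p : P), s • p = p → s = 1)
    (hproper : IsProperMap (fun sp : H × P => (sp.1 • sp.2, sp.2))) :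
    ∃ tr : {qp : P × P // MulAction.orbit H qp.1 = MulAction.orbit H qp.2} → H,
      Continuous tr ∧
      (∀ qp, tr qp • qp.val.2 = qp.val.1) ∧
      (∀ qp (s : H), s • qp.val.2 = qp.val.1 → s = tr qp) :=
  statement1_general H P hfree hproper
end

section
/- With H acting on the left of P commuting with the right K-action, and commuting strongly continuous actions τ : H → Aut(C), σ : K → Aut(C), the formula ((lt⊗τ)_s f)(p) = τ_s(f(s⁻¹•p)) defines a strongly continuous action of H by *-automorphisms on the induced C*-algebra Ind(C,σ). -/
/-!
The translation `lt ⊗ τ` is isometric and multiplicative, hence an action of `H` by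
*-automorphisms of `C_b(P, C)`. It preserves `Ind(C, σ)` because the `H`- and `K`-structures
commute, so that each `s : H` descends to a continuous self-map of `P/K`.

Strong continuity reduces to continuity at `1`. For `g ∈ Ind(C, σ)` the function
`ψ(u, p) = ‖τ_u (g (u⁻¹ • p)) - g p‖` is jointly continuous, vanishes at `u = 1` and is
`K`-invariant in `p`. As `P → P/K` is open and `P` is locally compact, `‖g‖ ≥ δ` only on the
saturation of a compact `M ⊆ P`; the tube lemma over `M` and over `u • M` then gives
`ψ(u, ·) ≤ 2δ` uniformly for `u` near `1`.
-/

open BoundedContinuousFunction Filter Topology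

theorem IsOpenMap.exists_isCompact_image_superset {X Y : Type*} [TopologicalSpace X]
    [TopologicalSpace Y] [WeaklyLocallyCompactSpace X] {f : X → Y} (hf : IsOpenMap f)
    (hsurj : Function.Surjective f) {L : Set Y} (hL : IsCompact L) :
    ∃ M, IsCompact M ∧ L ⊆ f '' M := by
  choose N hNc hN using fun x : X => exists_compact_mem_nhds x
  obtain ⟨t, -, hLt⟩ := hL.elim_nhds_subcover (fun y => f '' N (Function.surjInv hsurj y))
    fun y _ => by
      simpa [Function.surjInv_eq hsurj] using hf.image_mem_nhds (hN (Function.surjInv hsurj y))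
  refine ⟨⋃ y ∈ t, N (Function.surjInv hsurj y), t.isCompact_biUnion fun y _ => hNc _, ?_⟩
  simpa only [Set.image_iUnion₂] using hLt

theorem Continuous.eventually_forall_lt_of_isCompact {X Y : Type*} [TopologicalSpace X]
    [TopologicalSpace Y] {φ : X × Y → ℝ} (hφ : Continuous φ) {M : Set Y} (hM : IsCompact M)
    {x₀ : X} {δ : ℝ} (h : ∀ y ∈ M, φ (x₀, y) < δ) : ∀ᶠ x in 𝓝 x₀, ∀ y ∈ M, φ (x, y) < δ :=
  hM.eventually_forall_of_forall_eventually fun y hy =>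
    hφ.continuousAt.eventually_lt continuousAt_const (h y hy)

theorem continuous_uncurry_starAlgEquiv {X C : Type*} [TopologicalSpace X]
    [NonUnitalCStarAlgebra C] {τ : X → C ≃⋆ₐ[ℂ] C} (hτ : ∀ c, Continuous fun x => τ x c) :
    Continuous fun z : X × C => τ z.1 z.2 :=
  continuous_prod_of_continuous_lipschitzWith' _ 1
    (fun x => (StarAlgEquiv.isometry (τ x)).lipschitz) hτ

section Induced

variable {H K P Q C : Type*} [Group H] [TopologicalSpace P] [TopologicalSpace Q]
  [MulAction H P] [NonUnitalCStarAlgebra C]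

def IsIndEquivariant (act : P → K → P) (σ : K → C ≃⋆ₐ[ℂ] C) (f : P →ᵇ C) : Prop :=
  ∀ p t, f (act p t) = (σ t).symm (f p)

-- `pK ↦ ‖f p‖` is in `C₀(P/K)`, phrased through compact superlevel sets.
def IndVanishing (πQ : P → Q) (f : P →ᵇ C) : Prop :=
  ∀ ε > (0 : ℝ), IsCompact {x : Q | ∃ p, πQ p = x ∧ ε ≤ ‖f p‖}

def ind (act : P → K → P) (σ : K → C ≃⋆ₐ[ℂ] C) (πQ : P → Q) : Set (P →ᵇ C) :=
  {f | IsIndEquivariant act σ f ∧ IndVanishing πQ f}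

variable {act : P → K → P} {σ : K → C ≃⋆ₐ[ℂ] C}

theorem IsIndEquivariant.norm_apply {f : P →ᵇ C} (hf : IsIndEquivariant act σ f) (p : P) (t : K) :
    ‖f (act p t)‖ = ‖f p‖ := by
  rw [hf, StarAlgEquiv.norm_map]

theorem IsIndEquivariant.sub {f g : P →ᵇ C} (hf : IsIndEquivariant act σ f)
    (hg : IsIndEquivariant act σ g) : IsIndEquivariant act σ (f - g) := fun p t => by
  simp only [coe_sub, Pi.sub_apply, hf p t, hg p t, map_sub]

theorem isOpenMap_of_fibers_eq_orbits [Group K] {πQ : P → Q} (hact1 : ∀ p, act p 1 = p)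
    (hactmul : ∀ p t t', act (act p t) t' = act p (t * t'))
    (hactcont : ∀ t, Continuous fun p => act p t) (hπQ : Topology.IsQuotientMap πQ)
    (hπQfib : ∀ p p', πQ p = πQ p' ↔ ∃ t, act p t = p') : IsOpenMap πQ := by
  intro U hU
  have hsat : πQ ⁻¹' (πQ '' U) = ⋃ t : K, (fun p => act p t) ⁻¹' U := by
    ext p
    simp only [Set.mem_preimage, Set.mem_image, Set.mem_iUnion]
    constructor
    · rintro ⟨q, hqU, hqp⟩
      obtain ⟨t, rfl⟩ := (hπQfib q p).mp hqp
      exact ⟨t⁻¹, by rwa [hactmul, mul_inv_cancel, hact1]⟩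
    · rintro ⟨t, ht⟩
      exact ⟨act p t, ht, (hπQfib _ _).mpr ⟨t⁻¹, by rw [hactmul, mul_inv_cancel, hact1]⟩⟩
  rw [← hπQ.isOpen_preimage, hsat]
  exact isOpen_iUnion fun t => hU.preimage (hactcont t)

theorem IndVanishing.exists_isCompact_forall_le_norm {πQ : P → Q} [WeaklyLocallyCompactSpace P]
    (hπQo : IsOpenMap πQ) (hπQs : Function.Surjective πQ)
    (hπQfib : ∀ p p', πQ p = πQ p' ↔ ∃ t, act p t = p') {f : P →ᵇ C}
    (hf : IndVanishing πQ f) {δ : ℝ} (hδ : 0 < δ) :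
    ∃ M, IsCompact M ∧ ∀ q, δ ≤ ‖f q‖ → ∃ m ∈ M, ∃ t, act m t = q := by
  obtain ⟨M, hMc, hLM⟩ := hπQo.exists_isCompact_image_superset hπQs (hf δ hδ)
  refine ⟨M, hMc, fun q hq => ?_⟩
  obtain ⟨m, hm, hmq⟩ := hLM ⟨q, rfl, hq⟩
  exact ⟨m, hm, (hπQfib m q).mp hmq⟩

variable [ContinuousConstSMul H P]

noncomputable def ltTensor (τ : H → C ≃⋆ₐ[ℂ] C) (s : H) : (P →ᵇ C) →⋆ₙₐ[ℂ] (P →ᵇ C) where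
  toFun f := (f.compContinuous ⟨(s⁻¹ • ·), continuous_const_smul _⟩).comp (τ s)
    (StarAlgEquiv.isometry (τ s)).lipschitz
  map_smul' c f := by ext; simp
  map_zero' := by ext; simp
  map_add' f g := by ext; simp
  map_mul' f g := by ext; simp
  map_star' f := by ext; simp [map_star]

variable {τ : H → C ≃⋆ₐ[ℂ] C}

@[simp] theorem ltTensor_apply (s : H) (f : P →ᵇ C) (p : P) :
    ltTensor τ s f p = τ s (f (s⁻¹ • p)) := rfl

theorem ltTensor_one (hτ1 : ∀ c, τ 1 c = c) (f : P →ᵇ C) : ltTensor τ 1 f = f := by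
  ext p; simp [hτ1]

theorem ltTensor_mul (hτmul : ∀ s s' c, τ (s * s') c = τ s (τ s' c)) (s s' : H) (f : P →ᵇ C) :
    ltTensor τ (s * s') f = ltTensor τ s (ltTensor τ s' f) := by
  ext p; simp [hτmul, mul_smul]

theorem IsIndEquivariant.ltTensor (hcomm : ∀ (s : H) (p : P) (t : K), act (s • p) t = s • act p t)
    (hτσ : ∀ s t c, τ s (σ t c) = σ t (τ s c)) {f : P →ᵇ C} (hf : IsIndEquivariant act σ f)
    (s : H) : IsIndEquivariant act σ (ltTensor τ s f) := fun p t => by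
  rw [ltTensor_apply, ltTensor_apply, ← hcomm, hf, (σ t).eq_symm_apply, ← hτσ,
    StarAlgEquiv.apply_symm_apply]

theorem IndVanishing.ltTensor {πQ : P → Q} (hπQ : Topology.IsQuotientMap πQ)
    (hcomm : ∀ (s : H) (p : P) (t : K), act (s • p) t = s • act p t)
    (hπQfib : ∀ p p', πQ p = πQ p' ↔ ∃ t, act p t = p') {f : P →ᵇ C} (hf : IndVanishing πQ f)
    (s : H) : IndVanishing πQ (ltTensor τ s f) := by
  have hdesc : Function.FactorsThrough (fun p => πQ (s • p)) πQ := fun p p' h => by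
    obtain ⟨t, rfl⟩ := (hπQfib p p').mp h
    exact (hπQfib _ _).mpr ⟨t, hcomm s p t⟩
  let φ : Q → Q := fun x => πQ (s • Function.surjInv hπQ.surjective x)
  have hφ (p : P) : φ (πQ p) = πQ (s • p) := hdesc (Function.surjInv_eq hπQ.surjective _)
  have hφc : Continuous φ := hπQ.continuous_iff.2 <| by
    simpa only [Function.comp_def, hφ] using hπQ.continuous.comp (continuous_const_smul s)
  intro ε hε
  convert (hf ε hε).image hφc using 1
  ext x
  constructor
  · rintro ⟨p, rfl, hp⟩
    refine ⟨πQ (s⁻¹ • p), ⟨s⁻¹ • p, rfl, ?_⟩, by rw [hφ, smul_inv_smul]⟩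
    rwa [ltTensor_apply, StarAlgEquiv.norm_map] at hp
  · rintro ⟨_, ⟨p, rfl, hp⟩, rfl⟩
    refine ⟨s • p, (hφ p).symm, ?_⟩
    rwa [ltTensor_apply, inv_smul_smul, StarAlgEquiv.norm_map]

theorem mapsTo_ltTensor_ind {πQ : P → Q} (hπQ : Topology.IsQuotientMap πQ)
    (hcomm : ∀ (s : H) (p : P) (t : K), act (s • p) t = s • act p t)
    (hπQfib : ∀ p p', πQ p = πQ p' ↔ ∃ t, act p t = p')
    (hτσ : ∀ s t c, τ s (σ t c) = σ t (τ s c)) (s : H) :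
    Set.MapsTo (ltTensor τ s) (ind act σ πQ) (ind act σ πQ) := fun _ hf =>
  ⟨hf.1.ltTensor hcomm hτσ s, hf.2.ltTensor hπQ hcomm hπQfib s⟩

variable [TopologicalSpace H] [IsTopologicalGroup H]

theorem continuous_ltTensor (hτmul : ∀ s s' c, τ (s * s') c = τ s (τ s' c)) {f : P →ᵇ C}
    (hf : ∀ s, Tendsto (fun u => ltTensor τ u (ltTensor τ s f)) (𝓝 1) (𝓝 (ltTensor τ s f))) :
    Continuous fun s => ltTensor τ s f := by
  refine continuous_iff_continuousAt.2 fun s => ?_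
  have hs : Tendsto (fun x => x * s⁻¹) (𝓝 s) (𝓝 1) := by
    simpa using (continuous_mul_const s⁻¹).tendsto s
  simpa [ContinuousAt, Function.comp_def, ← ltTensor_mul hτmul] using (hf s).comp hs

variable [ContinuousSMul H P]

theorem tendsto_ltTensor_nhds_one (hτ1 : ∀ c, τ 1 c = c) (hτcont : ∀ c, Continuous fun s => τ s c)
    (hcomm : ∀ (s : H) (p : P) (t : K), act (s • p) t = s • act p t)
    (hτσ : ∀ s t c, τ s (σ t c) = σ t (τ s c)) {g : P →ᵇ C} (hg : IsIndEquivariant act σ g)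
    (hgM : ∀ δ > 0, ∃ M, IsCompact M ∧ ∀ q, δ ≤ ‖g q‖ → ∃ m ∈ M, ∃ t, act m t = q) :
    Tendsto (fun u => ltTensor τ u g) (𝓝 1) (𝓝 g) := by
  rw [Metric.tendsto_nhds]
  intro ε hε
  obtain ⟨M, hMc, hM⟩ := hgM (ε / 3) (by positivity)
  set ψ : H × P → ℝ := fun z => ‖ltTensor τ z.1 g z.2 - g z.2‖
  have hψ : Continuous ψ :=
    ((continuous_uncurry_starAlgEquiv hτcont).comp (continuous_fst.prodMk (g.continuous.comp
      ((continuous_inv.comp continuous_fst).smul continuous_snd))) |>.sub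
        (g.continuous.comp continuous_snd)).norm
  have hψ_act (u : H) (p : P) (t : K) : ψ (u, act p t) = ψ (u, p) :=
    ((hg.ltTensor hcomm hτσ u).sub hg).norm_apply p t
  have hψ_one (p : P) : ψ (1, p) = 0 := by simp [ψ, hτ1]
  have h₁ := hψ.eventually_forall_lt_of_isCompact hMc (x₀ := 1) (δ := ε / 3)
    fun m _ => by rw [hψ_one]; positivity
  have h₂ := (hψ.comp (continuous_fst.prodMk continuous_smul)).eventually_forall_lt_of_isCompact
    hMc (x₀ := 1) (δ := ε / 3) fun m _ => by
      simp only [Function.comp_apply, one_smul, hψ_one]; positivity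
  filter_upwards [h₁, h₂] with u hu₁ hu₂
  have hle (p : P) : ψ (u, p) ≤ 2 * (ε / 3) := by
    by_cases hp : ε / 3 ≤ ‖g p‖
    · obtain ⟨m, hm, t, rfl⟩ := hM p hp
      linarith [hψ_act u m t, hu₁ m hm]
    by_cases hp' : ε / 3 ≤ ‖g (u⁻¹ • p)‖
    · obtain ⟨m, hm, t, ht⟩ := hM _ hp'
      have hp : p = act (u • m) t := by rw [hcomm, ht, smul_inv_smul]
      rw [hp, hψ_act]
      exact (hu₂ m hm).le.trans (by linarith)
    push Not at hp hp'
    calc ψ (u, p) ≤ ‖τ u (g (u⁻¹ • p))‖ + ‖g p‖ := norm_sub_le _ _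
      _ ≤ 2 * (ε / 3) := by rw [StarAlgEquiv.norm_map]; linarith
  refine lt_of_le_of_lt ((dist_le (C := 2 * (ε / 3)) (by positivity)).2 fun p => ?_) (by linarith)
  rw [dist_eq_norm]
  exact hle p

end Induced

theorem statement5_general
    (H K P : Type*) [Group H] [TopologicalSpace H] [IsTopologicalGroup H]
    [Group K] [TopologicalSpace K] [TopologicalSpace P] [LocallyCompactSpace P]
    [MulAction H P] [ContinuousSMul H P]
    -- a continuous right action of K on P, commuting with the H-action
    (act : P → K → P) (hact1 : ∀ p, act p 1 = p)
    (hactmul : ∀ p t t', act (act p t) t' = act p (t * t'))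
    (hactcont : Continuous fun x : P × K => act x.1 x.2)
    (hcomm : ∀ (s : H) (p : P) (t : K), act (s • p) t = s • act p t)
    -- the orbit space P/K with its quotient map
    (Q : Type*) [TopologicalSpace Q] (πQ : P → Q) (hπQ : Topology.IsQuotientMap πQ)
    (hπQfib : ∀ p p', πQ p = πQ p' ↔ ∃ t, act p t = p')
    -- a C*-algebra C
    (C : Type*) [NonUnitalNormedRing C] [StarRing C] [CStarRing C] [NormedSpace ℂ C]
    [IsScalarTower ℂ C C] [SMulCommClass ℂ C C] [StarModule ℂ C] [CompleteSpace C]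
    -- commuting strongly continuous actions τ of H and σ of K on C
    (τ : H → C ≃⋆ₐ[ℂ] C) (hτ1 : ∀ c, τ 1 c = c)
    (hτmul : ∀ s s' c, τ (s * s') c = τ s (τ s' c))
    (hτcont : ∀ c, Continuous fun s => τ s c)
    (σ : K → C ≃⋆ₐ[ℂ] C)
    (hτσ : ∀ s t c, τ s (σ t c) = σ t (τ s c)) :
    ∃ T : H → (P →ᵇ C) → (P →ᵇ C),
      -- the defining formula
      (∀ s f p, T s f p = τ s (f (s⁻¹ • p))) ∧
      -- T s preserves Ind(C,σ)
      (∀ s, Set.MapsTo (T s)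
        {f : P →ᵇ C | (∀ p t, f (act p t) = (σ t).symm (f p)) ∧
          (∀ ε > (0:ℝ), IsCompact {x : Q | ∃ p, πQ p = x ∧ ε ≤ ‖f p‖})}
        {f : P →ᵇ C | (∀ p t, f (act p t) = (σ t).symm (f p)) ∧
          (∀ ε > (0:ℝ), IsCompact {x : Q | ∃ p, πQ p = x ∧ ε ≤ ‖f p‖})}) ∧
      -- T is an action of the group H
      (∀ f, T 1 f = f) ∧ (∀ s s' f, T (s * s') f = T s (T s' f)) ∧
      -- each T s is a *-automorphism (on all of C_b(P,C), hence on Ind(C,σ))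
      (∀ s f g, T s (f + g) = T s f + T s g) ∧
      (∀ s (c : ℂ) f, T s (c • f) = c • T s f) ∧
      (∀ s f g, T s (f * g) = T s f * T s g) ∧
      (∀ s f, T s (star f) = star (T s f)) ∧
      -- strong continuity on Ind(C,σ)
      (∀ f : P →ᵇ C,
        ((∀ p t, f (act p t) = (σ t).symm (f p)) ∧
          (∀ ε > (0:ℝ), IsCompact {x : Q | ∃ p, πQ p = x ∧ ε ≤ ‖f p‖})) →
        Continuous fun s => T s f) := by
  let _ : NonUnitalCStarAlgebra C := {}
  have hπQo : IsOpenMap πQ := isOpenMap_of_fibers_eq_orbits hact1 hactmul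
    (fun t => hactcont.comp (Continuous.prodMk_left t)) hπQ hπQfib
  have hmaps := mapsTo_ltTensor_ind (τ := τ) hπQ hcomm hπQfib hτσ
  refine ⟨fun s f => ltTensor τ s f, fun _ _ _ => rfl, hmaps, ltTensor_one hτ1,
    ltTensor_mul hτmul, fun s => map_add _, fun s => map_smul _, fun s => map_mul _,
    fun s => map_star _, fun f hf => continuous_ltTensor hτmul fun s => ?_⟩
  obtain ⟨hequiv, hvanish⟩ := hmaps s hf
  exact tendsto_ltTensor_nhds_one hτ1 hτcont hcomm hτσ hequiv fun δ hδ =>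
    hvanish.exists_isCompact_forall_le_norm hπQo hπQ.surjective hπQfib hδ

/-- With `H` acting on the left of `P` commuting with the right `K`-action,
and commuting strongly continuous actions `τ`, `σ` of `H`, `K` on the C*-algebra `C`,
the formula `((lt⊗τ)_s f)(p) = τ_s (f (s⁻¹•p))` defines a strongly continuous action of
`H` by *-automorphisms on the induced C*-algebra `Ind(C,σ) ⊆ C_b(P,C)`. -/
theorem statement5
    (H K P : Type*) [Group H] [TopologicalSpace H] [IsTopologicalGroup H]
    [LocallyCompactSpace H] [Group K] [TopologicalSpace K] [IsTopologicalGroup K]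
    [LocallyCompactSpace K] [TopologicalSpace P] [T2Space P] [LocallyCompactSpace P]
    [MulAction H P] [ContinuousSMul H P]
    -- a continuous right action of K on P, commuting with the H-action
    (act : P → K → P) (hact1 : ∀ p, act p 1 = p)
    (hactmul : ∀ p t t', act (act p t) t' = act p (t * t'))
    (hactcont : Continuous fun x : P × K => act x.1 x.2)
    (hcomm : ∀ (s : H) (p : P) (t : K), act (s • p) t = s • act p t)
    -- the orbit space P/K with its quotient map
    (Q : Type*) [TopologicalSpace Q] (πQ : P → Q) (hπQ : Topology.IsQuotientMap πQ)
    (hπQfib : ∀ p p', πQ p = πQ p' ↔ ∃ t, act p t = p')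
    -- a C*-algebra C
    (C : Type*) [NonUnitalNormedRing C] [StarRing C] [CStarRing C] [NormedSpace ℂ C]
    [IsScalarTower ℂ C C] [SMulCommClass ℂ C C] [StarModule ℂ C] [CompleteSpace C]
    [NormedStarGroup C]
    -- commuting strongly continuous actions τ of H and σ of K on C
    (τ : H → C ≃⋆ₐ[ℂ] C) (hτ1 : ∀ c, τ 1 c = c)
    (hτmul : ∀ s s' c, τ (s * s') c = τ s (τ s' c))
    (hτcont : ∀ c, Continuous fun s => τ s c)
    (σ : K → C ≃⋆ₐ[ℂ] C) (hσ1 : ∀ c, σ 1 c = c)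
    (hσmul : ∀ t t' c, σ (t * t') c = σ t (σ t' c))
    (hσcont : ∀ c, Continuous fun t => σ t c)
    (hτσ : ∀ s t c, τ s (σ t c) = σ t (τ s c)) :
    ∃ T : H → (P →ᵇ C) → (P →ᵇ C),
      -- the defining formula
      (∀ s f p, T s f p = τ s (f (s⁻¹ • p))) ∧
      -- T s preserves Ind(C,σ)
      (∀ s, Set.MapsTo (T s)
        {f : P →ᵇ C | (∀ p t, f (act p t) = (σ t).symm (f p)) ∧
          (∀ ε > (0:ℝ), IsCompact {x : Q | ∃ p, πQ p = x ∧ ε ≤ ‖f p‖})}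
        {f : P →ᵇ C | (∀ p t, f (act p t) = (σ t).symm (f p)) ∧
          (∀ ε > (0:ℝ), IsCompact {x : Q | ∃ p, πQ p = x ∧ ε ≤ ‖f p‖})}) ∧
      -- T is an action of the group H
      (∀ f, T 1 f = f) ∧ (∀ s s' f, T (s * s') f = T s (T s' f)) ∧
      -- each T s is a *-automorphism (on all of C_b(P,C), hence on Ind(C,σ))
      (∀ s f g, T s (f + g) = T s f + T s g) ∧
      (∀ s (c : ℂ) f, T s (c • f) = c • T s f) ∧
      (∀ s f g, T s (f * g) = T s f * T s g) ∧
      (∀ s f, T s (star f) = star (T s f)) ∧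
      -- strong continuity on Ind(C,σ)
      (∀ f : P →ᵇ C,
        ((∀ p t, f (act p t) = (σ t).symm (f p)) ∧
          (∀ ε > (0:ℝ), IsCompact {x : Q | ∃ p, πQ p = x ∧ ε ≤ ‖f p‖})) →
        Continuous fun s => T s f) :=
  statement5_general H K P act hact1 hactmul hactcont hcomm Q πQ hπQ hπQfib C τ hτ1 hτmul hτcont σ
    hτσ
end

section
/- Let H be a locally compact group acting on a locally compact Hausdorff space P, let C be a C*-algebra with a continuous H-action τ, and suppose v : H × P → C is continuous with compact support contained in M × N (M ⊆ H, N ⊆ P compact). If K acts properly on the right of P, then for the B-valued inner product ⟨v(s,·), v(s,·)⟩_B(t,p) = v(s,p)* σ_t(v(s,p·t)) Δ_K(t)^{-1/2}, one has the norm estimate ∫_H ‖⟨v(s,·),v(s,·)⟩_B‖ ds ≤ μ_H(M) · ‖v‖_∞² · ∫_{{t ∈ K : N ∩ N·t⁻¹ ≠ ∅}} Δ_K(t)^{-1/2} dt, and the integration domain {t ∈ K : N ∩ N·t⁻¹ ≠ ∅} is compact (hence the bound is finite). -/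
/-!
The set of `t` with `N ∩ N·t⁻¹ ≠ ∅` is the projection to `K` of the preimage of `N × N` under
the proper map `(p, t) ↦ (p·t, p)`, hence compact. For fixed `s ∈ M`, the `t`-integrand
`sup_p ‖Δ(t)^{-1/2} v(s,p)* σ_t(v(s,p·t))‖` of the `L¹`-bound vanishes off that set and is at
most `‖v‖_∞² Δ(t)^{-1/2}` on it, since `σ_t` is isometric; for `s ∉ M` the `L¹`-bound is `0`.
Integrating the resulting bound over `M` gives the estimate.
-/

open MeasureTheory Set

theorem isCompact_setOf_exists_mem_act_mem {P K : Type*} [TopologicalSpace P]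
    [TopologicalSpace K] {act : P → K → P}
    (hproper : IsProperMap (fun x : P × K => (act x.1 x.2, x.1))) {N : Set P}
    (hN : IsCompact N) : IsCompact {t : K | ∃ p ∈ N, act p t ∈ N} := by
  have hpre : IsCompact ((fun x : P × K => (act x.1 x.2, x.1)) ⁻¹' (N ×ˢ N)) :=
    hproper.isCompact_preimage (hN.prod hN)
  convert hpre.image continuous_snd using 1
  ext t
  constructor
  · rintro ⟨p, hp, hpt⟩
    exact ⟨(p, t), ⟨hpt, hp⟩, rfl⟩
  · rintro ⟨⟨p, t⟩, ⟨hpt, hp⟩, rfl⟩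
    exact ⟨p, hp, hpt⟩

theorem bddAbove_range_norm_of_support_subset {X E : Type*} [TopologicalSpace X]
    [SeminormedAddGroup E] {f : X → E} (hf : Continuous f) {s : Set X} (hs : IsCompact s)
    (hsupp : ∀ x, f x ≠ 0 → x ∈ s) : BddAbove (range fun x => ‖f x‖) := by
  refine ((hs.bddAbove_image (continuous_norm.comp hf).continuousOn).insert 0).mono ?_
  rintro _ ⟨x, rfl⟩
  by_cases hx : f x = 0
  · simp [hx]
  · exact mem_insert_of_mem _ ⟨x, hsupp x hx, rfl⟩

theorem integral_le_setIntegral_of_le_indicator {X : Type*} [MeasurableSpace X]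
    {μ : Measure X} {f g : X → ℝ} {s : Set X} (hs : μ s ≠ ⊤) (hfg : ∀ x, f x ≤ s.indicator g x)
    (hg : IntegrableOn g s μ) (hg0 : ∀ x, 0 ≤ g x) : ∫ x, f x ∂μ ≤ ∫ x in s, g x ∂μ := by
  by_cases hf : Integrable f μ
  · have hhull : μ.restrict (toMeasurable μ s) = μ.restrict s := Measure.restrict_toMeasurable hs
    have hmeas := measurableSet_toMeasurable μ s
    calc ∫ x, f x ∂μ ≤ ∫ x, (toMeasurable μ s).indicator g x ∂μ := by
          have hgT : Integrable ((toMeasurable μ s).indicator g) μ :=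
            (integrable_indicator_iff hmeas).2 (by rwa [IntegrableOn, hhull])
          exact integral_mono hf hgT fun x =>
            (hfg x).trans (indicator_le_indicator_of_subset (subset_toMeasurable μ s) hg0 x)
      _ = ∫ x in s, g x ∂μ := by rw [integral_indicator hmeas, hhull]
  · rw [integral_undef hf]
    exact integral_nonneg hg0

theorem integral_iSup_norm_smul_star_mul_le {K P C : Type*} [TopologicalSpace K]
    [MeasurableSpace K] [OpensMeasurableSpace K] {μ : Measure K} [IsLocallyFiniteMeasure μ]
    [NonUnitalNormedRing C] [StarRing C] [NormedStarGroup C] [NormedSpace ℝ C]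
    {w : K → ℝ} (hw : Continuous w) (hw0 : ∀ t, 0 ≤ w t) {act : P → K → P}
    {σ : K → C → C} (hσ : ∀ t c, ‖σ t c‖ = ‖c‖) {u : P → C} {N : Set P}
    (hu : ∀ p, u p ≠ 0 → p ∈ N) (hS : IsCompact {t : K | ∃ p ∈ N, act p t ∈ N})
    {R : ℝ} (huR : ∀ p, ‖u p‖ ≤ R) :
    ∫ t, ⨆ p, ‖w t • (star (u p) * σ t (u (act p t)))‖ ∂μ ≤
      R ^ 2 * ∫ t in {t : K | ∃ p ∈ N, act p t ∈ N}, w t ∂μ := by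
  set S := {t : K | ∃ p ∈ N, act p t ∈ N}
  have hterm : ∀ t p, ‖w t • (star (u p) * σ t (u (act p t)))‖ ≤
      S.indicator (fun t => R ^ 2 * w t) t := by
    intro t p
    by_cases ht : t ∈ S
    · rw [indicator_of_mem ht, norm_smul, Real.norm_of_nonneg (hw0 t), mul_comm, sq]
      refine mul_le_mul_of_nonneg_right ?_ (hw0 t)
      calc ‖star (u p) * σ t (u (act p t))‖ ≤ ‖u p‖ * ‖u (act p t)‖ := by
            simpa only [norm_star, hσ] using norm_mul_le (star (u p)) (σ t (u (act p t)))
        _ ≤ R * R := mul_le_mul (huR _) (huR _) (norm_nonneg _) ((norm_nonneg _).trans (huR p))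
    · have hzero : u p = 0 ∨ u (act p t) = 0 := by
        by_contra! h
        exact ht ⟨p, hu p h.1, hu _ h.2⟩
      rw [indicator_of_notMem ht]
      rcases hzero with h | h
      · simp [h]
      · have hσ0 : σ t (u (act p t)) = 0 := norm_eq_zero.1 (by rw [hσ, h, norm_zero])
        simp [hσ0]
  have hbound0 : ∀ t, 0 ≤ R ^ 2 * w t := fun t => mul_nonneg (sq_nonneg R) (hw0 t)
  have hbound : IntegrableOn (fun t => R ^ 2 * w t) S μ :=
    (continuous_const.mul hw).locallyIntegrable.integrableOn_isCompact hS
  rw [← integral_const_mul]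
  exact integral_le_setIntegral_of_le_indicator hS.measure_ne_top
    (fun t => Real.iSup_le (hterm t) (indicator_nonneg (fun t _ => hbound0 t) t))
    hbound hbound0

theorem statement7_general
    (H K P : Type*) [Group H] [TopologicalSpace H]
    [MeasurableSpace H]
    [Group K] [TopologicalSpace K] [LocallyCompactSpace K]
    [MeasurableSpace K] [BorelSpace K]
    [TopologicalSpace P]
    (μH : Measure H) [μH.IsHaarMeasure] (μK : Measure K) [μK.IsHaarMeasure]
    -- modular function of K
    (Δ : K → ℝ) (hΔpos : ∀ t, 0 < Δ t) (hΔcont : Continuous Δ)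
    -- a proper continuous right action of K on P
    (act : P → K → P)
    (hproperK : IsProperMap (fun x : P × K => (act x.1 x.2, x.1)))
    -- a C*-algebra C with an action of K by isometric *-automorphisms
    (C : Type*) [NonUnitalNormedRing C] [StarRing C] [NormedSpace ℂ C]
    [NormedSpace ℝ C]
    [NormedStarGroup C]
    (σ : K → C ≃⋆ₐ[ℂ] C)
    (hσiso : ∀ t c, ‖σ t c‖ = ‖c‖)
    -- v ∈ C_c(H × P, C) with support in M × N
    (v : H × P → C) (hv : Continuous v)
    (M : Set H) (N : Set P) (hM : IsCompact M) (hN : IsCompact N)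
    (hsupp : ∀ sp : H × P, v sp ≠ 0 → sp.1 ∈ M ∧ sp.2 ∈ N)
    -- the C*-norm Nb of elements of C_c(K, C_0(P,C)), dominated by the L¹-norm
    (Nb : (K → P → C) → ℝ)
    (hNb : ∀ b : K → P → C, Nb b ≤ ∫ t, (⨆ p, ‖b t p‖) ∂μK) :
    -- the integration domain is compact
    IsCompact {t : K | ∃ p ∈ N, act p t ∈ N} ∧
    -- the estimate
    (∫ s, Nb (fun t p =>
        (Δ t ^ (-(1:ℝ)/2)) • (star (v (s, p)) * σ t (v (s, act p t)))) ∂μH) ≤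
      (μH M).toReal * (⨆ sp : H × P, ‖v sp‖) ^ 2 *
        ∫ t in {t : K | ∃ p ∈ N, act p t ∈ N}, Δ t ^ (-(1:ℝ)/2) ∂μK := by
  set S := {t : K | ∃ p ∈ N, act p t ∈ N}
  have hS : IsCompact S := isCompact_setOf_exists_mem_act_mem hproperK hN
  refine ⟨hS, ?_⟩
  set R := ⨆ sp : H × P, ‖v sp‖
  have hR : ∀ sp, ‖v sp‖ ≤ R := le_ciSup (bddAbove_range_norm_of_support_subset hv
    (hM.prod hN) fun sp h => mem_prod.2 (hsupp sp h))
  have hw : Continuous fun t => Δ t ^ (-(1:ℝ)/2) :=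
    hΔcont.rpow_const fun t => Or.inl (hΔpos t).ne'
  have hw0 : ∀ t, 0 ≤ Δ t ^ (-(1:ℝ)/2) := fun t => (Real.rpow_pos_of_pos (hΔpos t) _).le
  set c := R ^ 2 * ∫ t in S, Δ t ^ (-(1:ℝ)/2) ∂μK
  have hc : 0 ≤ c := mul_nonneg (sq_nonneg R) (integral_nonneg fun t => hw0 t)
  have hinner : ∀ s, Nb (fun t p => (Δ t ^ (-(1:ℝ)/2)) •
      (star (v (s, p)) * σ t (v (s, act p t)))) ≤ M.indicator (fun _ => c) s := by
    intro s
    refine (hNb _).trans ?_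
    by_cases hs : s ∈ M
    · rw [indicator_of_mem hs]
      exact integral_iSup_norm_smul_star_mul_le (σ := fun t c => σ t c) hw hw0 hσiso
        (fun p h => (hsupp _ h).2) hS fun p => hR (s, p)
    · have hv0 : ∀ p, v (s, p) = 0 := fun p => by_contra fun h => hs (hsupp _ h).1
      simp [hv0, indicator_of_notMem hs]
  calc _ ≤ ∫ _ in M, c ∂μH :=
        integral_le_setIntegral_of_le_indicator hM.measure_ne_top hinner
          (integrableOn_const hM.measure_ne_top) fun _ => hc
    _ = _ := by rw [setIntegral_const, smul_eq_mul, measureReal_def, mul_assoc]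

/-- the `L¹`-norm estimate
`∫_H ‖⟨v(s,·),v(s,·)⟩_B‖ ds ≤ μ_H(M)·‖v‖_∞²·∫_{t : N ∩ N·t⁻¹ ≠ ∅} Δ_K(t)^{-1/2} dt`
for a continuous `v : H × P → C` supported in `M × N`, where the `B`-valued inner
product is `⟨v(s,·),v(s,·)⟩_B(t,p) = Δ_K(t)^{-1/2} v(s,p)* σ_t(v(s,p·t))` and the
C*-norm `Nb` on `C_c(K × P, C)` is dominated by the `L¹`-norm; moreover the
integration domain `{t ∈ K : N ∩ N·t⁻¹ ≠ ∅}` is compact. -/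
theorem statement7
    (H K P : Type*) [Group H] [TopologicalSpace H] [IsTopologicalGroup H]
    [LocallyCompactSpace H] [MeasurableSpace H] [BorelSpace H]
    [Group K] [TopologicalSpace K] [IsTopologicalGroup K] [LocallyCompactSpace K]
    [MeasurableSpace K] [BorelSpace K]
    [TopologicalSpace P] [T2Space P] [LocallyCompactSpace P]
    (μH : Measure H) [μH.IsHaarMeasure] (μK : Measure K) [μK.IsHaarMeasure]
    -- modular function of K
    (Δ : K → ℝ) (hΔpos : ∀ t, 0 < Δ t) (hΔ1 : Δ 1 = 1)
    (hΔmul : ∀ t t', Δ (t * t') = Δ t * Δ t') (hΔcont : Continuous Δ)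
    (hΔ : ∀ t : K, Measure.map (fun u => u * t) μK = (ENNReal.ofReal (Δ t))⁻¹ • μK)
    -- a proper continuous right action of K on P
    (act : P → K → P) (hact1 : ∀ p, act p 1 = p)
    (hactmul : ∀ p t t', act (act p t) t' = act p (t * t'))
    (hactcont : Continuous fun x : P × K => act x.1 x.2)
    (hproperK : IsProperMap (fun x : P × K => (act x.1 x.2, x.1)))
    -- a C*-algebra C with an action of K by isometric *-automorphisms
    (C : Type*) [NonUnitalNormedRing C] [StarRing C] [CStarRing C] [NormedSpace ℂ C]
    [NormedSpace ℝ C] [IsScalarTower ℂ C C] [SMulCommClass ℂ C C] [StarModule ℂ C]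
    [NormedStarGroup C] [CompleteSpace C]
    (σ : K → C ≃⋆ₐ[ℂ] C) (hσ1 : ∀ c, σ 1 c = c)
    (hσmul : ∀ t t' c, σ (t * t') c = σ t (σ t' c))
    (hσcont : ∀ c, Continuous fun t => σ t c)
    (hσiso : ∀ t c, ‖σ t c‖ = ‖c‖)
    -- v ∈ C_c(H × P, C) with support in M × N
    (v : H × P → C) (hv : Continuous v)
    (M : Set H) (N : Set P) (hM : IsCompact M) (hN : IsCompact N)
    (hsupp : ∀ sp : H × P, v sp ≠ 0 → sp.1 ∈ M ∧ sp.2 ∈ N)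
    -- the C*-norm Nb of elements of C_c(K, C_0(P,C)), dominated by the L¹-norm
    (Nb : (K → P → C) → ℝ)
    (hNb : ∀ b : K → P → C, Nb b ≤ ∫ t, (⨆ p, ‖b t p‖) ∂μK) :
    -- the integration domain is compact
    IsCompact {t : K | ∃ p ∈ N, act p t ∈ N} ∧
    -- the estimate
    (∫ s, Nb (fun t p =>
        (Δ t ^ (-(1:ℝ)/2)) • (star (v (s, p)) * σ t (v (s, act p t)))) ∂μH) ≤
      (μH M).toReal * (⨆ sp : H × P, ‖v sp‖) ^ 2 *
        ∫ t in {t : K | ∃ p ∈ N, act p t ∈ N}, Δ t ^ (-(1:ℝ)/2) ∂μK :=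
  statement7_general H K P μH μK Δ hΔpos hΔcont act hproperK C σ hσiso v hv M N hM hN hsupp Nb hNb
end

section
/- Suppose H acts freely and properly on P, N ⊆ P is H-saturated and open with an H-equivariant homeomorphism φ : N → (H\N) × H (H acting on the second factor by left translation), and (μ,U) is a covariant representation of (C_0(P,C), H, lt⊗τ) that is nondegenerate on I_N, with invariant subspace H₁ = closure of span{μ(g)h : g ∈ I_N, h ∈ H}. Then ν₁ := (extension of μ|_{H₁} to M(I_N)) ∘ ι, where ι(f) is the multiplier acting by (ι(f)g)(p) = f(φ₂(p))g(p), is a nondegenerate representation of C_0(H) on H₁ such that (ν₁, U|_{H₁}) is a covariant representation of (C_0(H), H, lt) and ν₁(C_0(H)) commutes with μ(C_0(P,C))|_{H₁}. -/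
/-!
On the span of the vectors `μ(g)y` with `g ∈ I_N`, set `ν(f)(∑ μ(gᵢ)yᵢ) = ∑ μ(ι(f)gᵢ)yᵢ`. This is
well defined and bounded by `‖f‖`: for fixed `gᵢ, yᵢ` the map `σ : f ↦ ∑ μ(ι(f)gᵢ)yᵢ` is a bounded
linear map with `⟪σ a, σ a⟫ = ⟪∑ μ(gᵢ)yᵢ, σ (a⋆a)⟫`, as `ι` is a ⋆-homomorphism into the
multipliers of `I_N`, and then `‖σ a‖² ≤ ‖∑ μ(gᵢ)yᵢ‖ ‖σ‖ ‖a‖²` forces `‖σ‖ ≤ ‖∑ μ(gᵢ)yᵢ‖`.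
Extending by continuity to `𝓗₁` and by `0` on `𝓗₁ᗮ` gives `ν₁`. Every remaining identity holds on
the generators `μ(g)y`, where it is a pointwise identity for `ι`, and hence on `𝓗₁`. For
nondegeneracy, `{p | ε ≤ ‖g p‖}` is a compact subset of `N` for `g ∈ I_N`; a bump `f ∈ C₀(H)` equal
to `1` on its image under `φ₂` gives `‖ι(f)g - g‖ ≤ ε`.
-/

open ZeroAtInfty
open scoped Classical

open scoped InnerProductSpace CStarAlgebra
open Set Submodule Finsupp

section Extension

variable {𝕜 E F X : Type*} [RCLike 𝕜] [NormedAddCommGroup E] [InnerProductSpace 𝕜 E]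

theorem ContinuousLinearMap.ext_of_eqOn_of_eqOn_orthogonal [NormedAddCommGroup F]
    [NormedSpace 𝕜 F] (K : Submodule 𝕜 E) [K.HasOrthogonalProjection] {A B : E →L[𝕜] F}
    (hK : EqOn A B K) (hKperp : EqOn A B Kᗮ) : A = B := by
  ext x
  rw [← add_sub_cancel (K.starProjection x) x, map_add, map_add,
    hK (K.starProjection_apply_mem x), hKperp (K.sub_starProjection_mem_orthogonal x)]

theorem ContinuousLinearMap.opNorm_le_of_inner_apply_self {A : Type*} [NonUnitalNormedRing A]
    [StarRing A] [NormedStarGroup A] [NormedSpace 𝕜 A] (σ : A →L[𝕜] E) (x : E)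
    (h : ∀ a, ⟪σ a, σ a⟫_𝕜 = ⟪x, σ (star a * a)⟫_𝕜) : ‖σ‖ ≤ ‖x‖ := by
  have hsq : ∀ a, ‖σ a‖ ^ 2 ≤ (‖x‖ * ‖σ‖) * ‖a‖ ^ 2 := fun a => calc
    ‖σ a‖ ^ 2 = ‖⟪x, σ (star a * a)⟫_𝕜‖ := by
      rw [← h, inner_self_eq_norm_sq_to_K, norm_pow, RCLike.norm_ofReal, abs_norm]
    _ ≤ ‖x‖ * (‖σ‖ * ‖star a * a‖) :=
      (norm_inner_le_norm _ _).trans (by gcongr; exact σ.le_opNorm _)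
    _ ≤ ‖x‖ * (‖σ‖ * (‖a‖ * ‖a‖)) := by
      gcongr; exact (norm_mul_le _ _).trans_eq (by rw [norm_star])
    _ = (‖x‖ * ‖σ‖) * ‖a‖ ^ 2 := by ring
  have hle : ‖σ‖ ≤ √(‖x‖ * ‖σ‖) := σ.opNorm_le_bound (Real.sqrt_nonneg _) fun a => by
    rw [← Real.sqrt_sq (norm_nonneg (σ a)), ← Real.sqrt_sq (norm_nonneg a), ← Real.sqrt_mul
      (by positivity)]
    exact Real.sqrt_le_sqrt (hsq a)
  have := (Real.le_sqrt (norm_nonneg _) (by positivity)).1 hle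
  nlinarith [norm_nonneg σ, norm_nonneg x]

theorem norm_linearCombination_apply_le {A : Type*} [NonUnitalNormedRing A] [StarRing A]
    [NormedStarGroup A] [NormedSpace 𝕜 A] (ψ : X → A →L[𝕜] E) (v : X → E)
    (h : ∀ i j a, ⟪ψ i a, ψ j a⟫_𝕜 = ⟪v i, ψ j (star a * a)⟫_𝕜) (m : X →₀ 𝕜) (a : A) :
    ‖linearCombination 𝕜 (fun i => ψ i a) m‖ ≤ ‖a‖ * ‖linearCombination 𝕜 v m‖ := by
  have happly : ∀ b, linearCombination 𝕜 ψ m b = linearCombination 𝕜 (fun i => ψ i b) m := by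
    intro b
    simp [linearCombination_apply, Finsupp.sum]
  have hσ : ‖linearCombination 𝕜 ψ m‖ ≤ ‖linearCombination 𝕜 v m‖ := by
    refine ContinuousLinearMap.opNorm_le_of_inner_apply_self _ _ fun b => ?_
    rw [happly, happly]
    simp only [linearCombination_apply, Finsupp.sum, sum_inner, inner_sum,
      inner_smul_left, inner_smul_right, h]
  rw [← happly, mul_comm]
  exact (ContinuousLinearMap.le_opNorm _ a).trans (by gcongr)

theorem exists_clm_apply_eq_of_norm_le [CompleteSpace E] [NormedAddCommGroup F]
    [NormedSpace 𝕜 F] [CompleteSpace F] (v : X → E) (w : X → F) (c : ℝ)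
    (h : ∀ m : X →₀ 𝕜, ‖linearCombination 𝕜 w m‖ ≤ c * ‖linearCombination 𝕜 v m‖) :
    ∃ T : E →L[𝕜] F, (∀ i, T (v i) = w i) ∧
      (∀ x, T x ∈ (span 𝕜 (range w)).topologicalClosure) ∧
      ∀ x ∈ (span 𝕜 (range v)).topologicalClosureᗮ, T x = 0 := by
  set K := (span 𝕜 (range v)).topologicalClosure
  have hmem : ∀ m, linearCombination 𝕜 v m ∈ K := fun m =>
    le_topologicalClosure _ (by rw [← range_linearCombination]; exact LinearMap.mem_range_self _ m)
  let e : (X →₀ 𝕜) →ₗ[𝕜] K := (linearCombination 𝕜 v).codRestrict K hmem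
  have he : DenseRange e := by
    rw [DenseRange, Subtype.dense_iff, ← range_comp]
    change K.carrier ⊆ closure (LinearMap.range (linearCombination 𝕜 v) : Set E)
    rw [range_linearCombination]
    rfl
  have hbound : ∃ C, ∀ m, ‖linearCombination 𝕜 w m‖ ≤ C * ‖e m‖ := ⟨c, h⟩
  have hproj : ∀ i, K.orthogonalProjectionOnto (v i) = e (single i 1) := by
    intro i
    rw [← orthogonalProjectionOnto_mem_subspace_eq_self (e (single i 1))]
    simp [e]
  refine ⟨((linearCombination 𝕜 w).extendOfNorm e).comp K.orthogonalProjectionOnto, ?_, ?_, ?_⟩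
  · intro i
    simp [hproj, LinearMap.extendOfNorm_eq he hbound]
  · intro x
    refine he.induction_on (p := fun y => (linearCombination 𝕜 w).extendOfNorm e y ∈ _)
      (K.orthogonalProjectionOnto x) ?_ fun m => ?_
    · exact (isClosed_topologicalClosure _).preimage (ContinuousLinearMap.continuous _)
    · rw [LinearMap.extendOfNorm_eq he hbound]
      exact le_topologicalClosure _
        (by rw [← range_linearCombination]; exact LinearMap.mem_range_self _ m)
  · intro x hx
    simp [orthogonalProjectionOnto_eq_zero_iff.2 hx]

end Extension

theorem ZeroAtInftyContinuousMap.isCompact_setOf_le_norm {P C : Type*} [TopologicalSpace P]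
    [NormedAddCommGroup C] (g : C₀(P, C)) {ε : ℝ} (hε : 0 < ε) :
    IsCompact {p | ε ≤ ‖g p‖} := by
  obtain ⟨K, hK, hKg⟩ := Filter.mem_cocompact.1
    (Metric.tendsto_nhds.1 (zero_at_infty g) ε hε)
  refine hK.of_isClosed_subset (isClosed_le continuous_const (map_continuous g).norm)
    fun p hp => by_contra fun hpK => ?_
  have : ‖g p‖ < ε := by simpa using hKg hpK
  exact (not_le.2 this) hp

theorem ZeroAtInftyContinuousMap.exists_eqOn_one {H : Type*} [TopologicalSpace H]
    [RegularSpace H] [LocallyCompactSpace H] {K : Set H} (hK : IsCompact K) :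
    ∃ f : C₀(H, ℂ), EqOn f 1 K ∧ ∀ r, ‖f r - 1‖ ≤ 1 := by
  obtain ⟨χ, hχK, -, hχc, hχ01⟩ :=
    exists_continuous_one_zero_of_isCompact hK isClosed_empty (disjoint_empty K)
  refine ⟨⟨⟨fun r => (χ r : ℂ), by fun_prop⟩,
    (hχc.comp_left Complex.ofReal_zero).is_zero_at_infty⟩, fun r hr => ?_, fun r => ?_⟩
  · simp [hχK hr]
  · have := hχ01 r
    change ‖(χ r : ℂ) - 1‖ ≤ 1
    rw [show (χ r : ℂ) - 1 = ((χ r - 1 : ℝ) : ℂ) by push_cast; ring, Complex.norm_real,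
      Real.norm_eq_abs, abs_le]
    constructor <;> linarith [this.1, this.2]

section PullbackMultiplier

variable {H P C : Type*} [TopologicalSpace H] [TopologicalSpace P]

def IsPullbackMultiplier [NonUnitalNormedRing C] [NormedSpace ℂ C] (N : Set P) (φ : N → H)
    (ι : C₀(H, ℂ) → C₀(P, C) → C₀(P, C)) : Prop :=
  ∀ f g, (∀ p ∉ N, g p = 0) → ∀ p, ι f g p = if h : p ∈ N then f (φ ⟨p, h⟩) • g p else 0

namespace IsPullbackMultiplier

variable [NonUnitalNormedRing C] [NormedSpace ℂ C] {N : Set P} {φ : N → H}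
  {ι : C₀(H, ℂ) → C₀(P, C) → C₀(P, C)} {g : C₀(P, C)}

theorem apply_of_mem (hι : IsPullbackMultiplier N φ ι) (hg : ∀ p ∉ N, g p = 0) (f : C₀(H, ℂ))
    {p : P} (hp : p ∈ N) : ι f g p = f (φ ⟨p, hp⟩) • g p := by
  rw [hι f g hg, dif_pos hp]

theorem apply_of_notMem (hι : IsPullbackMultiplier N φ ι) (hg : ∀ p ∉ N, g p = 0)
    (f : C₀(H, ℂ)) {p : P} (hp : p ∉ N) : ι f g p = 0 := by
  rw [hι f g hg, dif_neg hp]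

theorem add_left (hι : IsPullbackMultiplier N φ ι) (hg : ∀ p ∉ N, g p = 0) (f f' : C₀(H, ℂ)) :
    ι (f + f') g = ι f g + ι f' g := by
  ext p
  simp only [ZeroAtInftyContinuousMap.add_apply, hι _ g hg]
  split_ifs <;> simp [add_smul]

theorem smul_left (hι : IsPullbackMultiplier N φ ι) (hg : ∀ p ∉ N, g p = 0) (c : ℂ)
    (f : C₀(H, ℂ)) : ι (c • f) g = c • ι f g := by
  ext p
  simp only [ZeroAtInftyContinuousMap.smul_apply, hι _ g hg]
  split_ifs <;> simp [smul_smul]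

theorem apply_apply (hι : IsPullbackMultiplier N φ ι) (hg : ∀ p ∉ N, g p = 0)
    (f f' : C₀(H, ℂ)) : ι f (ι f' g) = ι (f * f') g := by
  ext p
  simp only [hι _ _ (fun p hp => hι.apply_of_notMem hg f' hp), hι _ g hg,
    ZeroAtInftyContinuousMap.mul_apply]
  split_ifs <;> simp [smul_smul]

theorem norm_le (hι : IsPullbackMultiplier N φ ι) (hg : ∀ p ∉ N, g p = 0) (f : C₀(H, ℂ)) :
    ‖ι f g‖ ≤ ‖f‖ * ‖g‖ := by
  refine ((ι f g).toBCF.norm_le (by positivity)).2 fun p => ?_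
  change ‖ι f g p‖ ≤ _
  rw [hι f g hg]
  split_ifs
  · rw [norm_smul]
    exact mul_le_mul (f.toBCF.norm_coe_le_norm _) (g.toBCF.norm_coe_le_norm p)
      (norm_nonneg _) (norm_nonneg _)
  · simp only [norm_zero]; positivity

theorem norm_apply_sub_le (hι : IsPullbackMultiplier N φ ι) (hg : ∀ p ∉ N, g p = 0) {ε : ℝ}
    (hε : 0 ≤ ε) {f : C₀(H, ℂ)} (hf1 : ∀ q : N, ε ≤ ‖g q‖ → f (φ q) = 1)
    (hf : ∀ r, ‖f r - 1‖ ≤ 1) : ‖ι f g - g‖ ≤ ε := by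
  refine ((ι f g - g).toBCF.norm_le hε).2 fun p => ?_
  change ‖ι f g p - g p‖ ≤ ε
  by_cases hp : p ∈ N
  · rw [hι.apply_of_mem hg f hp, ← one_smul ℂ (g p), smul_smul, mul_one, ← sub_smul,
      norm_smul]
    by_cases hgp : ε ≤ ‖g p‖
    · simp [hf1 ⟨p, hp⟩ hgp, hε]
    · exact (mul_le_of_le_one_left (norm_nonneg _) (hf _)).trans (not_le.1 hgp).le
  · simp [hι.apply_of_notMem hg f hp, hg p hp, hε]

theorem exists_norm_apply_sub_le [LocallyCompactSpace H] [RegularSpace H]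
    (hι : IsPullbackMultiplier N φ ι) (hφ : Continuous φ) (hg : ∀ p ∉ N, g p = 0) {ε : ℝ}
    (hε : 0 < ε) : ∃ f : C₀(H, ℂ), ‖ι f g - g‖ ≤ ε := by
  have hK : IsCompact (φ '' {q : N | ε ≤ ‖g q‖}) := by
    refine (Subtype.isCompact_iff.2 ?_).image hφ
    convert g.isCompact_setOf_le_norm hε using 1
    refine (image_preimage_eq_of_subset (f := Subtype.val) (s := {p | ε ≤ ‖g p‖})
      fun p hp => ?_)
    rw [Subtype.range_coe]
    by_contra hpN
    exact not_le.2 hε (by simpa [hg p hpN] using hp)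
  obtain ⟨f, hf1, hf⟩ := ZeroAtInftyContinuousMap.exists_eqOn_one hK
  exact ⟨f, hι.norm_apply_sub_le hg hε.le (fun q hq => hf1 ⟨q, hq, rfl⟩) hf⟩

theorem mul_apply [SMulCommClass ℂ C C] (hι : IsPullbackMultiplier N φ ι)
    (hg : ∀ p ∉ N, g p = 0) (f : C₀(H, ℂ)) (a : C₀(P, C)) : a * ι f g = ι f (a * g) := by
  ext p
  simp only [ZeroAtInftyContinuousMap.mul_apply,
    hι f (a * g) (fun p hp => by simp [hg p hp]), hι f g hg]
  split_ifs <;> simp [mul_smul_comm]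

theorem star_apply_mul [IsScalarTower ℂ C C] [StarRing C] [NormedStarGroup C] [StarModule ℂ C]
    (hι : IsPullbackMultiplier N φ ι) (hg : ∀ p ∉ N, g p = 0) (f : C₀(H, ℂ)) (a : C₀(P, C)) :
    star (ι f g) * a = ι (star f) (star g * a) := by
  ext p
  simp only [ZeroAtInftyContinuousMap.mul_apply, ZeroAtInftyContinuousMap.star_apply,
    hι (star f) (star g * a) (fun p hp => by simp [hg p hp]), hι f g hg]
  split_ifs <;> simp [star_smul, smul_mul_assoc]

noncomputable def toCLM (hι : IsPullbackMultiplier N φ ι) (hg : ∀ p ∉ N, g p = 0) :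
    C₀(H, ℂ) →L[ℂ] C₀(P, C) :=
  LinearMap.mkContinuous ⟨⟨(ι · g), hι.add_left hg⟩, hι.smul_left hg⟩ ‖g‖ fun f =>
    (hι.norm_le hg f).trans_eq (mul_comm _ _)

end IsPullbackMultiplier

end PullbackMultiplier

theorem twist_apply_eq_zero {H P C : Type*} [Group H] [MulAction H P] [TopologicalSpace P]
    [NormedAddCommGroup C] {N : Set P} {g : C₀(P, C)} {F : Type*} [FunLike F C C]
    [ZeroHomClass F C C] {τ : H → F} {α : H → C₀(P, C) → C₀(P, C)}
    (hα : ∀ s g p, α s g p = τ s (g (s⁻¹ • p)))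
    (hN : ∀ (s : H) (q : P), q ∈ N → s • q ∈ N) (hg : ∀ p ∉ N, g p = 0) (s : H) :
    ∀ p ∉ N, α s g p = 0 := by
  intro p hp
  rw [hα, hg _ fun h => hp (by simpa using hN s _ h), map_zero]

theorem IsPullbackMultiplier.twist_apply {H P C : Type*} [Group H] [TopologicalSpace H]
    [TopologicalSpace P] [MulAction H P] [NonUnitalNormedRing C] [NormedSpace ℂ C]
    {N : Set P} {φ : N → H} {ι : C₀(H, ℂ) → C₀(P, C) → C₀(P, C)} {g : C₀(P, C)}
    {F : Type*} [FunLike F C C] [ZeroHomClass F C C] [MulActionHomClass F ℂ C C]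
    {τ : H → F} {α : H → C₀(P, C) → C₀(P, C)} (hι : IsPullbackMultiplier N φ ι)
    (hα : ∀ s g p, α s g p = τ s (g (s⁻¹ • p))) (hN : ∀ (s : H) (q : P), q ∈ N → s • q ∈ N)
    (hφ : ∀ (s : H) (q : N) (hq : s • (q : P) ∈ N), φ ⟨s • q, hq⟩ = s * φ q)
    (hg : ∀ p ∉ N, g p = 0) {s : H} {f f' : C₀(H, ℂ)} (hf' : ∀ r, f' r = f (s⁻¹ * r)) :
    α s (ι f g) = ι f' (α s g) := by
  ext p
  rw [hα, hι f' (α s g) (twist_apply_eq_zero hα hN hg s)]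
  split_ifs with hp
  · have hp' : s⁻¹ • p ∈ N := hN _ _ hp
    rw [hι.apply_of_mem hg f hp', map_smul, hα, hf', ← hφ s⁻¹ ⟨p, hp⟩ hp']
  · have hp' : s⁻¹ • p ∉ N := fun h => hp (by simpa using hN s _ h)
    rw [hι.apply_of_notMem hg f hp', map_zero]

section Representation

theorem NonUnitalStarAlgHom.inner_map_apply_map_apply {A 𝓗 : Type*}
    [NonUnitalNonAssocSemiring A] [Module ℂ A] [Star A] [NormedAddCommGroup 𝓗]
    [InnerProductSpace ℂ 𝓗] [CompleteSpace 𝓗] (Φ : A →⋆ₙₐ[ℂ] (𝓗 →L[ℂ] 𝓗)) (a b : A)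
    (x y : 𝓗) : ⟪Φ a x, Φ b y⟫_ℂ = ⟪x, Φ (star a * b) y⟫_ℂ := by
  rw [map_mul, map_star, ContinuousLinearMap.star_eq_adjoint]
  exact (ContinuousLinearMap.adjoint_inner_right _ _ _).symm

theorem NonUnitalStarAlgHom.map_mul_apply {A 𝓗 : Type*} [NonUnitalNonAssocSemiring A]
    [Module ℂ A] [Star A] [NormedAddCommGroup 𝓗] [InnerProductSpace ℂ 𝓗] [CompleteSpace 𝓗]
    (Φ : A →⋆ₙₐ[ℂ] (𝓗 →L[ℂ] 𝓗)) (a b : A) (x : 𝓗) : Φ (a * b) x = Φ a (Φ b x) := by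
  rw [map_mul]
  rfl

variable {H P C 𝓗 : Type*} [TopologicalSpace H] [TopologicalSpace P] [NonUnitalCStarAlgebra C]
  [NormedAddCommGroup 𝓗] [InnerProductSpace ℂ 𝓗] [CompleteSpace 𝓗]

abbrev essentialSubspace (Φ : C₀(P, C) →⋆ₙₐ[ℂ] (𝓗 →L[ℂ] 𝓗)) (N : Set P) : Submodule ℂ 𝓗 :=
  (span ℂ {z | ∃ g y, (∀ p ∉ N, g p = 0) ∧ z = Φ g y}).topologicalClosure

variable {Φ : C₀(P, C) →⋆ₙₐ[ℂ] (𝓗 →L[ℂ] 𝓗)} {N : Set P}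

theorem apply_mem_essentialSubspace {g : C₀(P, C)} (hg : ∀ p ∉ N, g p = 0) (y : 𝓗) :
    Φ g y ∈ essentialSubspace Φ N :=
  le_topologicalClosure _ (subset_span ⟨g, y, hg, rfl⟩)

theorem mapsTo_essentialSubspace (A : 𝓗 →L[ℂ] 𝓗)
    (h : ∀ g y, (∀ p ∉ N, g p = 0) → A (Φ g y) ∈ essentialSubspace Φ N) :
    ∀ x ∈ essentialSubspace Φ N, A x ∈ essentialSubspace Φ N := by
  have hspan : MapsTo A (span ℂ {z | ∃ g y, (∀ p ∉ N, g p = 0) ∧ z = Φ g y})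
      (essentialSubspace Φ N) := fun x hx =>
    (span_le (p := (essentialSubspace Φ N).comap (A : 𝓗 →ₗ[ℂ] 𝓗)).2
      (by rintro _ ⟨g, y, hg, rfl⟩; exact h g y hg)) hx
  have := hspan.closure A.continuous
  rwa [(isClosed_topologicalClosure _).closure_eq] at this

theorem map_apply_mem_essentialSubspace (a : C₀(P, C)) :
    ∀ x ∈ essentialSubspace Φ N, Φ a x ∈ essentialSubspace Φ N :=
  mapsTo_essentialSubspace (Φ a) fun g y hg =>
    Φ.map_mul_apply a g y ▸ apply_mem_essentialSubspace (fun p hp => by simp [hg p hp]) y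

theorem eqOn_essentialSubspace {F : Type*} [NormedAddCommGroup F] [NormedSpace ℂ F]
    {A B : 𝓗 →L[ℂ] F} (h : ∀ g y, (∀ p ∉ N, g p = 0) → A (Φ g y) = B (Φ g y)) :
    EqOn A B (essentialSubspace Φ N) :=
  ContinuousLinearMap.eqOn_closure_span (by rintro _ ⟨g, y, hg, rfl⟩; exact h g y hg)

theorem eq_of_eqOn_essentialSubspace {A B : 𝓗 →L[ℂ] 𝓗}
    (h : ∀ g y, (∀ p ∉ N, g p = 0) → A (Φ g y) = B (Φ g y))
    (hA : ∀ x ∈ (essentialSubspace Φ N)ᗮ, A x = 0) (hB : ∀ x ∈ (essentialSubspace Φ N)ᗮ, B x = 0) :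
    A = B :=
  ContinuousLinearMap.ext_of_eqOn_of_eqOn_orthogonal _ (eqOn_essentialSubspace h)
    fun x hx => (hA x hx).trans (hB x hx).symm

variable {φ : N → H} {ι : C₀(H, ℂ) → C₀(P, C) → C₀(P, C)}

/-- The paper's `ν₁ = (extension of Φ|_{𝓗₁} to M(I_N)) ∘ ι`, normalised to be `0` on `𝓗₁ᗮ`. -/
structure IsMultiplierExtension (Φ : C₀(P, C) →⋆ₙₐ[ℂ] (𝓗 →L[ℂ] 𝓗)) (N : Set P)
    (ι : C₀(H, ℂ) → C₀(P, C) → C₀(P, C)) (ν : C₀(H, ℂ) → 𝓗 →L[ℂ] 𝓗) : Prop where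
  apply_map_apply : ∀ f g y, (∀ p ∉ N, g p = 0) → ν f (Φ g y) = Φ (ι f g) y
  apply_mem : ∀ f x, ν f x ∈ essentialSubspace Φ N
  apply_eq_zero : ∀ f, ∀ x ∈ (essentialSubspace Φ N)ᗮ, ν f x = 0

theorem exists_isMultiplierExtension (Φ : C₀(P, C) →⋆ₙₐ[ℂ] (𝓗 →L[ℂ] 𝓗))
    (hι : IsPullbackMultiplier N φ ι) : ∃ ν, IsMultiplierExtension Φ N ι ν := by
  let X := {g : C₀(P, C) // ∀ p ∉ N, g p = 0} × 𝓗
  let ψ : X → C₀(H, ℂ) →L[ℂ] 𝓗 := fun i =>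
    (ContinuousLinearMap.apply ℂ 𝓗 i.2).comp
      (ContinuousLinearMap.comp ⟨(Φ : C₀(P, C) →ₗ[ℂ] (𝓗 →L[ℂ] 𝓗)), map_continuous Φ⟩
        (hι.toCLM i.1.2))
  have hψ : ∀ i j a, ⟪ψ i a, ψ j a⟫_ℂ = ⟪Φ i.1 i.2, ψ j (star a * a)⟫_ℂ := by
    rintro ⟨⟨g, hg⟩, y⟩ ⟨⟨g', hg'⟩, y'⟩ a
    change ⟪Φ (ι a g) y, Φ (ι a g') y'⟫_ℂ = ⟪Φ g y, Φ (ι (star a * a) g') y'⟫_ℂ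
    have hgg' : ∀ p ∉ N, (star g * g') p = 0 := fun p hp => by simp [hg' p hp]
    rw [Φ.inner_map_apply_map_apply, Φ.inner_map_apply_map_apply, hι.star_apply_mul hg,
      hι.mul_apply hg', hι.apply_apply hgg', ← hι.mul_apply hg']
  have hrange : range (fun i : X => Φ i.1 i.2) =
      {z | ∃ g y, (∀ p ∉ N, g p = 0) ∧ z = Φ g y} := by
    ext z
    constructor
    · rintro ⟨⟨⟨g, hg⟩, y⟩, rfl⟩
      exact ⟨g, y, hg, rfl⟩
    · rintro ⟨g, y, hg, rfl⟩
      exact ⟨⟨⟨g, hg⟩, y⟩, rfl⟩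
  choose ν hν using fun f => exists_clm_apply_eq_of_norm_le (fun i : X => Φ i.1 i.2)
    (fun i => ψ i f) ‖f‖ (norm_linearCombination_apply_le ψ _ hψ · f)
  refine ⟨ν, fun f g y hg => (hν f).1 (⟨g, hg⟩, y), fun f x => ?_, fun f x hx => ?_⟩
  · refine topologicalClosure_mono (span_mono ?_) ((hν f).2.1 x)
    rintro _ ⟨⟨⟨g, hg⟩, y⟩, rfl⟩
    exact ⟨ι f g, y, fun p hp => hι.apply_of_notMem hg f hp, rfl⟩
  · exact (hν f).2.2 x (by rwa [hrange])

namespace IsMultiplierExtension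

variable {ν : C₀(H, ℂ) → 𝓗 →L[ℂ] 𝓗}

theorem map_add (hν : IsMultiplierExtension Φ N ι ν) (hι : IsPullbackMultiplier N φ ι)
    (f f' : C₀(H, ℂ)) : ν (f + f') = ν f + ν f' :=
  eq_of_eqOn_essentialSubspace
    (fun g y hg => by simp [hν.apply_map_apply _ _ _ hg, hι.add_left hg])
    (hν.apply_eq_zero _)
    (fun x hx => by simp [hν.apply_eq_zero f x hx, hν.apply_eq_zero f' x hx])

theorem map_smul (hν : IsMultiplierExtension Φ N ι ν) (hι : IsPullbackMultiplier N φ ι)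
    (c : ℂ) (f : C₀(H, ℂ)) : ν (c • f) = c • ν f :=
  eq_of_eqOn_essentialSubspace
    (fun g y hg => by simp [hν.apply_map_apply _ _ _ hg, hι.smul_left hg])
    (hν.apply_eq_zero _)
    (fun x hx => by simp [hν.apply_eq_zero f x hx])

theorem map_mul (hν : IsMultiplierExtension Φ N ι ν) (hι : IsPullbackMultiplier N φ ι)
    (f f' : C₀(H, ℂ)) : ∀ x ∈ essentialSubspace Φ N, ν (f * f') x = ν f (ν f' x) :=
  eqOn_essentialSubspace (B := (ν f).comp (ν f')) fun g y hg => by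
    simp [hν.apply_map_apply _ _ _ hg,
      hν.apply_map_apply _ _ _ fun p hp => hι.apply_of_notMem hg f' hp, hι.apply_apply hg]

theorem apply_map_comm (hν : IsMultiplierExtension Φ N ι ν) (hι : IsPullbackMultiplier N φ ι)
    (f : C₀(H, ℂ)) (a : C₀(P, C)) :
    ∀ x ∈ essentialSubspace Φ N, ν f (Φ a x) = Φ a (ν f x) :=
  eqOn_essentialSubspace (A := (ν f).comp (Φ a)) (B := (Φ a).comp (ν f)) fun g y hg => by
    have hag : ∀ p ∉ N, (a * g) p = 0 := fun p hp => by simp [hg p hp]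
    simp only [ContinuousLinearMap.comp_apply]
    rw [← Φ.map_mul_apply, hν.apply_map_apply _ _ _ hag, hν.apply_map_apply _ _ _ hg,
      ← hι.mul_apply hg, Φ.map_mul_apply]

theorem inner_map_star (hν : IsMultiplierExtension Φ N ι ν) (hι : IsPullbackMultiplier N φ ι)
    (f : C₀(H, ℂ)) : ∀ x ∈ essentialSubspace Φ N, ∀ y ∈ essentialSubspace Φ N,
      ⟪ν (star f) x, y⟫_ℂ = ⟪x, ν f y⟫_ℂ := by
  have hgen : ∀ g z, (∀ p ∉ N, g p = 0) → ∀ y ∈ essentialSubspace Φ N,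
      ⟪ν (star f) (Φ g z), y⟫_ℂ = ⟪Φ g z, ν f y⟫_ℂ := fun g z hg =>
    eqOn_essentialSubspace (A := innerSL ℂ (ν (star f) (Φ g z)))
      (B := (innerSL ℂ (Φ g z)).comp (ν f)) fun g' z' hg' => by
        simp only [innerSL_apply_apply, ContinuousLinearMap.comp_apply,
          hν.apply_map_apply _ _ _ hg, hν.apply_map_apply _ _ _ hg',
          Φ.inner_map_apply_map_apply, hι.star_apply_mul hg, star_star, hι.mul_apply hg']
  intro x hx y hy
  have := eqOn_essentialSubspace (A := (innerSL ℂ y).comp (ν (star f)))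
    (B := innerSL ℂ (ν f y)) (fun g z hg => by
      simp only [ContinuousLinearMap.comp_apply, innerSL_apply_apply]
      rw [← inner_conj_symm, hgen g z hg y hy, inner_conj_symm]) hx
  simp only [ContinuousLinearMap.comp_apply, innerSL_apply_apply] at this
  rw [← inner_conj_symm, this, inner_conj_symm]

theorem intertwine (hν : IsMultiplierExtension Φ N ι ν) (V : 𝓗 →L[ℂ] 𝓗)
    (β : C₀(P, C) → C₀(P, C)) (hβN : ∀ g, (∀ p ∉ N, g p = 0) → ∀ p ∉ N, β g p = 0)
    (hV : ∀ g y, V (Φ g y) = Φ (β g) (V y)) {f f' : C₀(H, ℂ)}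
    (hβ : ∀ g, (∀ p ∉ N, g p = 0) → β (ι f g) = ι f' (β g)) :
    ∀ x ∈ essentialSubspace Φ N, V (ν f x) = ν f' (V x) :=
  eqOn_essentialSubspace (A := V.comp (ν f)) (B := (ν f').comp V) fun g y hg => by
    simp only [ContinuousLinearMap.comp_apply]
    rw [hν.apply_map_apply _ _ _ hg, hV, hβ g hg, hV, hν.apply_map_apply _ _ _ (hβN g hg)]

theorem mem_closure_span_range [LocallyCompactSpace H] [RegularSpace H]
    (hν : IsMultiplierExtension Φ N ι ν) (hι : IsPullbackMultiplier N φ ι) (hφ : Continuous φ) :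
    ∀ x ∈ essentialSubspace Φ N, x ∈ closure
      (span ℂ {z | ∃ f y, y ∈ essentialSubspace Φ N ∧ z = ν f y} : Set 𝓗) := by
  set V := span ℂ {z | ∃ f y, y ∈ essentialSubspace Φ N ∧ z = ν f y}
  have hgen : ∀ g y, (∀ p ∉ N, g p = 0) → Φ g y ∈ V.topologicalClosure := by
    intro g y hg
    refine Metric.mem_closure_iff.2 fun ε hε => ?_
    obtain ⟨f, hf⟩ := hι.exists_norm_apply_sub_le hφ hg (ε := ε / (‖y‖ + 1)) (by positivity)
    refine ⟨ν f (Φ g y), subset_span ⟨f, Φ g y, apply_mem_essentialSubspace hg y, rfl⟩, ?_⟩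
    rw [hν.apply_map_apply _ _ _ hg, dist_eq_norm, ← _root_.sub_apply, ← map_sub]
    calc ‖Φ (g - ι f g) y‖ ≤ ‖g - ι f g‖ * ‖y‖ :=
          ((Φ _).le_opNorm y).trans (by gcongr; exact NonUnitalStarAlgHom.norm_apply_le Φ _)
      _ ≤ ε / (‖y‖ + 1) * ‖y‖ := by gcongr; rwa [norm_sub_rev]
      _ < ε := by
        rw [div_mul_eq_mul_div, div_lt_iff₀ (by positivity)]
        nlinarith
  intro x hx
  exact topologicalClosure_minimal _
    (span_le.2 (by rintro _ ⟨g, y, hg, rfl⟩; exact hgen g y hg)) V.isClosed_topologicalClosure hx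

end IsMultiplierExtension

end Representation

theorem statement10_general
    (H P : Type*) [Group H] [TopologicalSpace H]
    [LocallyCompactSpace H] [T2Space H]
    [TopologicalSpace P]
    [MulAction H P]
    (C : Type*) [NonUnitalNormedRing C] [StarRing C] [CStarRing C] [NormedSpace ℂ C]
    [IsScalarTower ℂ C C] [SMulCommClass ℂ C C] [StarModule ℂ C]
    [CompleteSpace C]
    (τ : H → C ≃⋆ₐ[ℂ] C)
    -- the action lt⊗τ of H on C₀(P,C)
    (α : H → C₀(P, C) → C₀(P, C)) (hα : ∀ s g p, α s g p = τ s (g (s⁻¹ • p)))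
    -- a covariant representation (μ, U) of (C₀(P,C), H, lt⊗τ) on 𝓗
    (𝓗 : Type*) [NormedAddCommGroup 𝓗] [InnerProductSpace ℂ 𝓗] [CompleteSpace 𝓗]
    (μ : C₀(P, C) → 𝓗 →L[ℂ] 𝓗)
    (hμadd : ∀ g g', μ (g + g') = μ g + μ g')
    (hμsmul : ∀ (c : ℂ) g, μ (c • g) = c • μ g)
    (hμmul : ∀ g g', μ (g * g') = (μ g).comp (μ g'))
    (hμstar : ∀ g (x y : 𝓗), (inner ℂ (μ (star g) x) y : ℂ) = inner ℂ x (μ g y))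
    (U : H → 𝓗 ≃ₗᵢ[ℂ] 𝓗)
    (hcov : ∀ s g x, U s (μ g x) = μ (α s g) (U s x))
    -- N saturated open, trivial as an H-bundle via the equivariant homeomorphism e
    (B : Type*) [TopologicalSpace B] (N : Set P)
    (hNsat : ∀ (s : H) (q : P), q ∈ N → s • q ∈ N)
    (e : {p : P // p ∈ N} ≃ₜ B × H)
    (heq : ∀ (s : H) (q : {p : P // p ∈ N}) (hq : s • (q : P) ∈ N),
      e ⟨s • (q : P), hq⟩ = ((e q).1, s * (e q).2))
    -- the central multiplier ι(f) of I_N, as in the construction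
    (ι : C₀(H, ℂ) → C₀(P, C) → C₀(P, C))
    (hι : ∀ f g, (∀ p ∉ N, g p = 0) →
      ∀ p, ι f g p = if h : p ∈ N then f ((e ⟨p, h⟩).2) • g p else 0) :
    -- conclusion, with 𝓗₁ the essential subspace of μ|_{I_N}
    ∃ ν₁ : C₀(H, ℂ) → 𝓗 →L[ℂ] 𝓗,
      let 𝓗₁ : Submodule ℂ 𝓗 := (Submodule.span ℂ
        {z : 𝓗 | ∃ g y, (∀ p ∉ N, g p = 0) ∧ z = μ g y}).topologicalClosure
      -- 𝓗₁ is (μ,U)-invariant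
      (∀ g, ∀ x ∈ 𝓗₁, μ g x ∈ 𝓗₁) ∧ (∀ s, ∀ x ∈ 𝓗₁, U s x ∈ 𝓗₁) ∧
      -- ν₁ is determined by the extension formula ν₁(f)(μ(g)h) = μ(ι(f)g)h
      (∀ f g y, (∀ p ∉ N, g p = 0) → ν₁ f (μ g y) = μ (ι f g) y) ∧
      -- ν₁ is a representation of C₀(H) on 𝓗₁
      (∀ f, ∀ x ∈ 𝓗₁, ν₁ f x ∈ 𝓗₁) ∧
      (∀ f f', ν₁ (f + f') = ν₁ f + ν₁ f') ∧
      (∀ (c : ℂ) f, ν₁ (c • f) = c • ν₁ f) ∧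
      (∀ f f', ∀ x ∈ 𝓗₁, ν₁ (f * f') x = ν₁ f (ν₁ f' x)) ∧
      (∀ f, ∀ x ∈ 𝓗₁, ∀ y ∈ 𝓗₁, (inner ℂ (ν₁ (star f) x) y : ℂ) = inner ℂ x (ν₁ f y)) ∧
      -- nondegeneracy of ν₁ on 𝓗₁
      (∀ x ∈ 𝓗₁, x ∈ closure
        (Submodule.span ℂ {z : 𝓗 | ∃ f y, y ∈ 𝓗₁ ∧ z = ν₁ f y} : Set 𝓗)) ∧
      -- (ν₁, U|_{𝓗₁}) is covariant for (C₀(H), H, lt)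
      (∀ (s : H) (f f' : C₀(H, ℂ)), (∀ r, f' r = f (s⁻¹ * r)) →
        ∀ x ∈ 𝓗₁, U s (ν₁ f x) = ν₁ f' (U s x)) ∧
      -- ν₁(C₀(H)) commutes with μ(C₀(P,C)) on 𝓗₁
      (∀ f g, ∀ x ∈ 𝓗₁, ν₁ f (μ g x) = μ g (ν₁ f x)) := by
  
  let _ : NonUnitalCStarAlgebra C := {}
  let Φ : C₀(P, C) →⋆ₙₐ[ℂ] (𝓗 →L[ℂ] 𝓗) :=
    { toFun := μ
      map_smul' := hμsmul
      map_zero' := by simpa using hμsmul 0 0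
      map_add' := hμadd
      map_mul' := hμmul
      map_star' := fun g => by
        rw [ContinuousLinearMap.star_eq_adjoint, ContinuousLinearMap.eq_adjoint_iff]
        exact hμstar g }
  have hι' : IsPullbackMultiplier N (fun q => (e q).2) ι := hι
  have hφ (s : H) (q : N) (hq : s • (q : P) ∈ N) : (e ⟨s • q, hq⟩).2 = s * (e q).2 :=
    congrArg Prod.snd (heq s q hq)
  obtain ⟨ν, hν⟩ := exists_isMultiplierExtension Φ hι'
  have hαN (s : H) {g : C₀(P, C)} (hg : ∀ p ∉ N, g p = 0) : ∀ p ∉ N, α s g p = 0 :=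
    twist_apply_eq_zero hα hNsat hg s
  refine ⟨ν, ?_⟩
  intro 𝓗₁
  have h𝓗₁ : 𝓗₁ = essentialSubspace Φ N := rfl
  clear_value 𝓗₁
  subst h𝓗₁
  exact ⟨map_apply_mem_essentialSubspace,
    fun s => mapsTo_essentialSubspace (U s).toLinearIsometry.toContinuousLinearMap fun g y hg =>
      (hcov s g y).symm ▸ apply_mem_essentialSubspace (hαN s hg) _,
    hν.apply_map_apply, fun f x _ => hν.apply_mem f x, hν.map_add hι', hν.map_smul hι',
    hν.map_mul hι', hν.inner_map_star hι',
    hν.mem_closure_span_range hι' (continuous_snd.comp e.continuous),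
    fun s f f' hf' => hν.intertwine (U s).toLinearIsometry.toContinuousLinearMap (α s)
      (fun g hg => hαN s hg) (hcov s) (fun g hg => hι'.twist_apply hα hNsat hφ hg hf'),
    hν.apply_map_comm hι'⟩

/-- For `H` free and proper on `P`, an `H`-saturated open `N ⊆ P` with an
`H`-equivariant homeomorphism `φ = e : N ≃ (H\N) × H`, and a covariant representation
`(μ,U)` of `(C₀(P,C), H, lt⊗τ)` which is nonzero on `I_N`, with
`𝓗₁ = span{μ(g)h : g ∈ I_N}⁻`, the map `ν₁ = (extension of μ|_{𝓗₁} to M(I_N)) ∘ ι`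
(characterised by `ν₁(f)(μ(g)h) = μ(ι(f)g)h`) is a nondegenerate representation of
`C₀(H)` on `𝓗₁` such that `(ν₁, U|_{𝓗₁})` is covariant for `(C₀(H), H, lt)` and
`ν₁(C₀(H))` commutes with `μ(C₀(P,C))|_{𝓗₁}`. -/
theorem statement10
    (H P : Type*) [Group H] [TopologicalSpace H] [IsTopologicalGroup H]
    [LocallyCompactSpace H] [T2Space H]
    [TopologicalSpace P] [T2Space P] [LocallyCompactSpace P]
    [MulAction H P] [ContinuousSMul H P]
    (hfree : ∀ (s : H) (p : P), s • p = p → s = 1)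
    (hproper : IsProperMap (fun sp : H × P => (sp.1 • sp.2, sp.2)))
    (C : Type*) [NonUnitalNormedRing C] [StarRing C] [CStarRing C] [NormedSpace ℂ C]
    [IsScalarTower ℂ C C] [SMulCommClass ℂ C C] [StarModule ℂ C] [NormedStarGroup C]
    [CompleteSpace C]
    (τ : H → C ≃⋆ₐ[ℂ] C) (hτ1 : ∀ c, τ 1 c = c)
    (hτmul : ∀ s s' c, τ (s * s') c = τ s (τ s' c))
    (hτcont : ∀ c, Continuous fun s => τ s c)
    -- the action lt⊗τ of H on C₀(P,C)
    (α : H → C₀(P, C) → C₀(P, C)) (hα : ∀ s g p, α s g p = τ s (g (s⁻¹ • p)))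
    -- a covariant representation (μ, U) of (C₀(P,C), H, lt⊗τ) on 𝓗
    (𝓗 : Type*) [NormedAddCommGroup 𝓗] [InnerProductSpace ℂ 𝓗] [CompleteSpace 𝓗]
    (μ : C₀(P, C) → 𝓗 →L[ℂ] 𝓗)
    (hμadd : ∀ g g', μ (g + g') = μ g + μ g')
    (hμsmul : ∀ (c : ℂ) g, μ (c • g) = c • μ g)
    (hμmul : ∀ g g', μ (g * g') = (μ g).comp (μ g'))
    (hμstar : ∀ g (x y : 𝓗), (inner ℂ (μ (star g) x) y : ℂ) = inner ℂ x (μ g y))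
    (hμnd : ∀ x : 𝓗, x ∈ closure
      (Submodule.span ℂ {z : 𝓗 | ∃ g y, z = μ g y} : Set 𝓗))
    (U : H → 𝓗 ≃ₗᵢ[ℂ] 𝓗) (hU1 : ∀ x, U 1 x = x)
    (hUmul : ∀ s s' x, U (s * s') x = U s (U s' x))
    (hUcont : ∀ x, Continuous fun s => U s x)
    (hcov : ∀ s g x, U s (μ g x) = μ (α s g) (U s x))
    -- N saturated open, trivial as an H-bundle via the equivariant homeomorphism e
    (B : Type*) [TopologicalSpace B] (N : Set P) (hNopen : IsOpen N)
    (hNsat : ∀ (s : H) (q : P), q ∈ N → s • q ∈ N)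
    (e : {p : P // p ∈ N} ≃ₜ B × H)
    (heq : ∀ (s : H) (q : {p : P // p ∈ N}) (hq : s • (q : P) ∈ N),
      e ⟨s • (q : P), hq⟩ = ((e q).1, s * (e q).2))
    -- μ is nonzero (nondegenerate) on the ideal I_N
    (hμIN : ∃ g : C₀(P, C), (∀ p ∉ N, g p = 0) ∧ μ g ≠ 0)
    -- the central multiplier ι(f) of I_N, as in the construction
    (ι : C₀(H, ℂ) → C₀(P, C) → C₀(P, C))
    (hι : ∀ f g, (∀ p ∉ N, g p = 0) →
      ∀ p, ι f g p = if h : p ∈ N then f ((e ⟨p, h⟩).2) • g p else 0) :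
    -- conclusion, with 𝓗₁ the essential subspace of μ|_{I_N}
    ∃ ν₁ : C₀(H, ℂ) → 𝓗 →L[ℂ] 𝓗,
      let 𝓗₁ : Submodule ℂ 𝓗 := (Submodule.span ℂ
        {z : 𝓗 | ∃ g y, (∀ p ∉ N, g p = 0) ∧ z = μ g y}).topologicalClosure
      -- 𝓗₁ is (μ,U)-invariant
      (∀ g, ∀ x ∈ 𝓗₁, μ g x ∈ 𝓗₁) ∧ (∀ s, ∀ x ∈ 𝓗₁, U s x ∈ 𝓗₁) ∧
      -- ν₁ is determined by the extension formula ν₁(f)(μ(g)h) = μ(ι(f)g)h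
      (∀ f g y, (∀ p ∉ N, g p = 0) → ν₁ f (μ g y) = μ (ι f g) y) ∧
      -- ν₁ is a representation of C₀(H) on 𝓗₁
      (∀ f, ∀ x ∈ 𝓗₁, ν₁ f x ∈ 𝓗₁) ∧
      (∀ f f', ν₁ (f + f') = ν₁ f + ν₁ f') ∧
      (∀ (c : ℂ) f, ν₁ (c • f) = c • ν₁ f) ∧
      (∀ f f', ∀ x ∈ 𝓗₁, ν₁ (f * f') x = ν₁ f (ν₁ f' x)) ∧
      (∀ f, ∀ x ∈ 𝓗₁, ∀ y ∈ 𝓗₁, (inner ℂ (ν₁ (star f) x) y : ℂ) = inner ℂ x (ν₁ f y)) ∧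
      -- nondegeneracy of ν₁ on 𝓗₁
      (∀ x ∈ 𝓗₁, x ∈ closure
        (Submodule.span ℂ {z : 𝓗 | ∃ f y, y ∈ 𝓗₁ ∧ z = ν₁ f y} : Set 𝓗)) ∧
      -- (ν₁, U|_{𝓗₁}) is covariant for (C₀(H), H, lt)
      (∀ (s : H) (f f' : C₀(H, ℂ)), (∀ r, f' r = f (s⁻¹ * r)) →
        ∀ x ∈ 𝓗₁, U s (ν₁ f x) = ν₁ f' (U s x)) ∧
      -- ν₁(C₀(H)) commutes with μ(C₀(P,C)) on 𝓗₁
      (∀ f g, ∀ x ∈ 𝓗₁, ν₁ f (μ g x) = μ g (ν₁ f x)) :=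
  statement10_general H P C τ α hα 𝓗 μ hμadd hμsmul hμmul hμstar U hcov B N hNsat e heq ι hι
end

section
/- Let A be a C_0(P)-algebra with structure map ι_A : C_0(P) → ZM(A) nondegenerate and injective, inducing q_A : Prim A → P. Let τ : H → Aut A satisfy τ_s(f·a) = lt_s(f)·τ_s(a). Let ν be a nondegenerate representation of C_0(P,A) with kernel I_Δ := {b ∈ C_0(P,A) : b(q_A(I)) ∈ I for all I ∈ Prim A}. Then the restriction of the extension ν̄ (to the multiplier algebra) to the induced algebra Ind(A,τ) ⊆ C_b(P,A) ⊆ M(C_0(P,A)) has kernel exactly I(τ) := {b ∈ Ind(A,τ) : b(q_A(I)) ∈ I for all I ∈ Prim A}. -/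
open ZeroAtInfty BoundedContinuousFunction

/-!
A bounded `b` multiplies `C₀(P, A)` pointwise, and `ker ν = I_Δ` is a pointwise condition, so
`ν (b c) = 0` for all `c` iff `b(q_A(I)) c(q_A(I)) ∈ I` for all `I` and `c`. As evaluation at
`q_A(I)` is onto `A`, this says `b(q_A(I)) A ⊆ I`, which is `b(q_A(I)) ∈ I` because primitive
ideals are prime.
-/

namespace BoundedContinuousFunction

variable {α A : Type*} [TopologicalSpace α] [NonUnitalSeminormedRing A]

def mulZeroAtInfty (b : α →ᵇ A) (c : C₀(α, A)) : C₀(α, A) where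
  toFun p := b p * c p
  continuous_toFun := b.continuous.mul c.continuous
  zero_at_infty' := Filter.isBoundedUnder_le_mul_tendsto_zero
    (Filter.isBoundedUnder_of ⟨‖b‖, b.norm_coe_le_norm⟩) c.zero_at_infty'

theorem forall_mulZeroAtInfty_mem_iff {Λ : Type*} {memI : A → Λ → Prop} {qA : Λ → α}
    (hImulr : ∀ l a b, memI a l → memI (a * b) l)
    (hIprime : ∀ l b, (∀ a : A, memI (b * a) l) → memI b l)
    (hev : ∀ l (a : A), ∃ c : C₀(α, A), c (qA l) = a) (b : α →ᵇ A) :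
    (∀ c : C₀(α, A), ∀ l, memI (b.mulZeroAtInfty c (qA l)) l) ↔ ∀ l, memI (b (qA l)) l := by
  refine ⟨fun h l => hIprime l _ fun a => ?_, fun h c l => hImulr l _ _ (h l)⟩
  obtain ⟨c, rfl⟩ := hev l a
  exact h c l

end BoundedContinuousFunction

theorem statement11_general
    (H P : Type*) [Group H]
    [TopologicalSpace P]
    [MulAction H P]
    -- the orbit space H\P with its quotient map
    (Q : Type*) [TopologicalSpace Q] (πQ : P → Q)
    -- a C*-algebra A
    (A : Type*) [NonUnitalNormedRing A] [StarRing A] [NormedSpace ℂ A]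
    -- Prim A, abstracted: an index type Λ of primitive ideals memI · l
    (Λ : Type*) (memI : A → Λ → Prop)
    (hImulr : ∀ l a b, memI a l → memI (a * b) l)
    (hIprime : ∀ l b, (∀ a : A, memI (b * a) l) → memI b l)
    -- the induced map q_A : Prim A → P
    (qA : Λ → P)
    -- the action τ of H on A, compatible with the C₀(P)-structure
    (τ : H → A ≃⋆ₐ[ℂ] A)
    -- evaluation of C₀(P,A) at a point is surjective onto A
    (hev : ∀ (p : P) (a : A), ∃ c : C₀(P, A), c p = a)
    -- a Hilbert space 𝓗 and a nondegenerate representation ν of C₀(P,A) with ker ν = I_Δ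
    (𝓗 : Type*) [NormedAddCommGroup 𝓗] [InnerProductSpace ℂ 𝓗]
    (ν : C₀(P, A) → 𝓗 →L[ℂ] 𝓗)
    (hνker : ∀ c : C₀(P, A), ν c = 0 ↔ ∀ l, memI (c (qA l)) l) :
    -- conclusion: for b in the induced algebra Ind(A,τ) ⊆ C_b(P,A),
    -- ν̄(b) = 0  (i.e. ν(b·c) = 0 for all c)  iff  b ∈ I(τ)
    ∀ b : P →ᵇ A,
      (∀ (s : H) (p : P), b (s • p) = τ s (b p)) →
      (∀ ε > (0:ℝ), IsCompact {x : Q | ∃ p, πQ p = x ∧ ε ≤ ‖b p‖}) →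
      ((∀ c d : C₀(P, A), (∀ p, d p = b p * c p) → ν d = 0) ↔
        ∀ l, memI (b (qA l)) l) := by
  intro b _ _
  have hproduct : (∀ c d : C₀(P, A), (∀ p, d p = b p * c p) → ν d = 0) ↔
      ∀ c, ν (b.mulZeroAtInfty c) = 0 :=
    forall_congr' fun c => ⟨fun h => h _ fun _ => rfl, fun h d hd =>
      (ZeroAtInftyContinuousMap.ext hd : d = b.mulZeroAtInfty c) ▸ h⟩
  rw [hproduct]
  simp only [hνker]
  exact forall_mulZeroAtInfty_mem_iff hImulr hIprime (fun l => hev (qA l)) b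

/-- For a `C₀(P)`-algebra `A` (structure map `ιA` into the centre of
`M(A)`, inducing `q_A : Prim A → P`), an equivariant action `τ` of `H`, and a
nondegenerate representation `ν` of `C₀(P,A)` with kernel
`I_Δ = {c : c(q_A(I)) ∈ I ∀ I ∈ Prim A}`, the restriction of the multiplier extension
`ν̄` to `Ind(A,τ) ⊆ C_b(P,A)` has kernel exactly
`I(τ) = {b ∈ Ind(A,τ) : b(q_A(I)) ∈ I ∀ I ∈ Prim A}`.  (Here `ν̄(b) = 0` is expressed
by `ν(b·c) = 0` for all `c ∈ C₀(P,A)`, `Prim A` is abstracted as an index type `Λ` of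
primitive — in particular closed, two-sided, prime-like — ideals `memI · l`.) -/
theorem statement11
    (H P : Type*) [Group H] [TopologicalSpace H] [IsTopologicalGroup H]
    [TopologicalSpace P] [T2Space P] [LocallyCompactSpace P]
    [MulAction H P] [ContinuousSMul H P]
    -- the orbit space H\P with its quotient map
    (Q : Type*) [TopologicalSpace Q] (πQ : P → Q) (hπQ : Topology.IsQuotientMap πQ)
    (hπQfib : ∀ p p', πQ p = πQ p' ↔ ∃ s : H, s • p = p')
    -- a C*-algebra A
    (A : Type*) [NonUnitalNormedRing A] [StarRing A] [CStarRing A] [NormedSpace ℂ A]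
    [IsScalarTower ℂ A A] [SMulCommClass ℂ A A] [StarModule ℂ A] [NormedStarGroup A]
    [CompleteSpace A]
    -- the C₀(P)-algebra structure map ιA : C₀(P) → ZM(A), nondegenerate and injective
    (ιA : C₀(P, ℂ) → A → A)
    (hιadd : ∀ f a a', ιA f (a + a') = ιA f a + ιA f a')
    (hιadd' : ∀ f f' a, ιA (f + f') a = ιA f a + ιA f' a)
    (hιmul : ∀ f f' a, ιA (f * f') a = ιA f (ιA f' a))
    (hιcentral : ∀ f a b, ιA f a * b = ιA f (a * b) ∧ ιA f (a * b) = a * ιA f b)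
    (hιnd : ∀ a : A, a ∈ closure (Submodule.span ℂ {x : A | ∃ f b, x = ιA f b} : Set A))
    (hιinj : ∀ f, (∀ a, ιA f a = 0) → f = 0)
    -- Prim A, abstracted: an index type Λ of primitive ideals memI · l
    (Λ : Type*) (memI : A → Λ → Prop)
    (hI0 : ∀ l, memI 0 l)
    (hIadd : ∀ l a a', memI a l → memI a' l → memI (a + a') l)
    (hIsmul : ∀ l (c : ℂ) a, memI a l → memI (c • a) l)
    (hImull : ∀ l a b, memI a l → memI (b * a) l)
    (hImulr : ∀ l a b, memI a l → memI (a * b) l)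
    (hIclosed : ∀ l, IsClosed {a : A | memI a l})
    (hIprime : ∀ l b, (∀ a : A, memI (b * a) l) → memI b l)
    (hIsep : ∀ a : A, (∀ l, memI a l) → a = 0)
    -- the induced map q_A : Prim A → P
    (qA : Λ → P)
    (hqA : ∀ l (p : P), qA l = p ↔ ∀ (f : C₀(P, ℂ)) (a : A), f p = 0 → memI (ιA f a) l)
    -- the action τ of H on A, compatible with the C₀(P)-structure
    (τ : H → A ≃⋆ₐ[ℂ] A) (hτ1 : ∀ a, τ 1 a = a)
    (hτmul : ∀ s s' a, τ (s * s') a = τ s (τ s' a))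
    (hτcont : ∀ a, Continuous fun s => τ s a)
    (hττι : ∀ (s : H) (f : C₀(P, ℂ)) (f' : C₀(P, ℂ)) (a : A),
      (∀ p, f' p = f (s⁻¹ • p)) → τ s (ιA f a) = ιA f' (τ s a))
    -- evaluation of C₀(P,A) at a point is surjective onto A
    (hev : ∀ (p : P) (a : A), ∃ c : C₀(P, A), c p = a)
    -- a Hilbert space 𝓗 and a nondegenerate representation ν of C₀(P,A) with ker ν = I_Δ
    (𝓗 : Type*) [NormedAddCommGroup 𝓗] [InnerProductSpace ℂ 𝓗] [CompleteSpace 𝓗]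
    (ν : C₀(P, A) → 𝓗 →L[ℂ] 𝓗)
    (hνadd : ∀ c c', ν (c + c') = ν c + ν c')
    (hνsmul : ∀ (z : ℂ) c, ν (z • c) = z • ν c)
    (hνmul : ∀ c c', ν (c * c') = (ν c).comp (ν c'))
    (hνstar : ∀ c (x y : 𝓗), (inner ℂ (ν (star c) x) y : ℂ) = inner ℂ x (ν c y))
    (hνnd : ∀ x : 𝓗, x ∈ closure (Submodule.span ℂ {z : 𝓗 | ∃ c y, z = ν c y} : Set 𝓗))
    (hνker : ∀ c : C₀(P, A), ν c = 0 ↔ ∀ l, memI (c (qA l)) l) :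
    -- conclusion: for b in the induced algebra Ind(A,τ) ⊆ C_b(P,A),
    -- ν̄(b) = 0  (i.e. ν(b·c) = 0 for all c)  iff  b ∈ I(τ)
    ∀ b : P →ᵇ A,
      (∀ (s : H) (p : P), b (s • p) = τ s (b p)) →
      (∀ ε > (0:ℝ), IsCompact {x : Q | ∃ p, πQ p = x ∧ ε ≤ ‖b p‖}) →
      ((∀ c d : C₀(P, A), (∀ p, d p = b p * c p) → ν d = 0) ↔
        ∀ l, memI (b (qA l)) l) :=
  statement11_general H P Q πQ A Λ memI hImulr hIprime qA τ hev 𝓗 ν hνker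
end
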